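/- arXiv:2007.04595 — 7 statements merged into one kernel-verified Lean document; each statement's English description precedes it below -/
import Mathlib

section
/- Let k ≥ 1 and 0 < s ≤ 1. There exists a constant A > 0, depending only on k and s, such that the following holds. Let u, v : B(0,3) → ℝ be continuous functions on the open ball B(0,3) ⊆ ℂ^k such that u, v, and v − u are all plurisubharmonic. Then for every 0 < r ≤ 1/2 one has m_{B(0,1)}(u, r) ≤ m_{B(0,2)}(v, r^s) + A · m_{B(0,2)}(u, r^s) · r^{1−s}, and in particular m_{B(0,1)}(u, r) ≤ m_{B(0,2)}(v, r^s) + A · Ω_{B(0,2)}(u) · r^{1−s}. -/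
open Metric

/-- A continuous function `u` on `Ω ⊆ ℂ^k` is plurisubharmonic if it satisfies the
sub-mean value inequality on every complex line: whenever the closed disc
`{a + z • b : |z - z₀| ≤ ρ}` is contained in `Ω`, the value at the center is at most the
mean value on the boundary circle. -/
def IsPshOn {k : ℕ} (Ω : Set (EuclideanSpace ℂ (Fin k)))
    (u : EuclideanSpace ℂ (Fin k) → ℝ) : Prop :=
  ∀ (a b : EuclideanSpace ℂ (Fin k)) (z₀ : ℂ) (ρ : ℝ), 0 < ρ →
    (∀ z : ℂ, ‖z - z₀‖ ≤ ρ → a + z • b ∈ Ω) →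
    u (a + z₀ • b) ≤ (1 / (2 * Real.pi)) *
      ∫ θ in (0:ℝ)..(2 * Real.pi),
        u (a + (z₀ + (ρ : ℂ) * Complex.exp ((θ : ℂ) * Complex.I)) • b)

/-- The modulus of continuity `m_U(g, r) = sup {|g x - g y| : x, y ∈ U, dist x y ≤ r}`. -/
noncomputable def modCont {X : Type*} [PseudoMetricSpace X] (U : Set X) (g : X → ℝ)
    (r : ℝ) : ℝ :=
  sSup {t : ℝ | ∃ x ∈ U, ∃ y ∈ U, dist x y ≤ r ∧ t = |g x - g y|}

/-- The oscillation `Ω_U(g) = sup_U g - inf_U g = sup {|g x - g y| : x, y ∈ U}`. -/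
noncomputable def oscOn {X : Type*} [PseudoMetricSpace X] (U : Set X) (g : X → ℝ) : ℝ :=
  sSup {t : ℝ | ∃ x ∈ U, ∃ y ∈ U, t = |g x - g y|}

/-!
Restrict `u` and `v` to the complex line `ℓ z = x + z • (y - x)` through two points of `B(0,1)`
with `|x - y| ≤ r`, on the disc `|z| ≤ Q = r ^ (s - 1)`, which `ℓ` maps into `B(x, r ^ s)`.
The sub-mean value property of `u ∘ ℓ` on `D(1, Q - 1)` bounds `u y` by the mean of `u ∘ ℓ` over
that disc. The sub-mean value property of `(v - u) ∘ ℓ` on `D(0, Q)`, together with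
`v ∘ ℓ ≤ v x + m(v, r ^ s)`, bounds the mean of `u ∘ ℓ` over `D(0, Q)` by `u x + m(v, r ^ s)`.
Since `u ∘ ℓ` oscillates by at most `m(u, r ^ s)` on `D(0, Q)`, passing between the two means
costs `2 m(u, r ^ s) (Q² / (Q - 1)² - 1) = O(m(u, r ^ s) r ^ (1 - s))`.
-/

open MeasureTheory Set Real

theorem Complex.volume_real_ball (c : ℂ) {ρ : ℝ} (hρ : 0 ≤ ρ) :
    volume.real (ball c ρ) = π * ρ ^ 2 := by
  simp [measureReal_def, hρ, mul_comm]

theorem two_pi_mul_mul_circleAverage_eq_setIntegral_Ioo {f : ℂ → ℝ} (c : ℂ) (t : ℝ) :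
    2 * π * t * circleAverage f c t = ∫ θ in Ioo (-π) π, t * f (circleMap c t θ) := by
  have hper : Function.Periodic (fun θ => f (circleMap c t θ)) (2 * π) :=
    fun θ => by simp [periodic_circleMap c t θ]
  have hshift := hper.intervalIntegral_add_eq (-π) 0
  rw [show -π + 2 * π = π by ring, zero_add] at hshift
  rw [integral_const_mul, ← integral_Ioc_eq_integral_Ioo,
    ← intervalIntegral.integral_of_le (by linarith [pi_pos]), hshift, circleAverage_def,
    smul_eq_mul]
  field_simp

theorem integral_ball_eq_intervalIntegral_circleAverage {f : ℂ → ℝ} {c : ℂ} {ρ : ℝ}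
    (hρ : 0 ≤ ρ) (hf : ContinuousOn f (closedBall c ρ)) :
    ∫ z in ball c ρ, f z = ∫ t in (0)..ρ, 2 * π * t * circleAverage f c t := by
  set S := Ioo 0 ρ ×ˢ Ioo (-π) π
  have hS : S ⊆ polarCoord.target := by
    rw [polarCoord_target]
    exact prod_mono Ioo_subset_Ioi_self subset_rfl
  have hcirc (p : ℝ × ℝ) : c + Complex.polarCoord.symm p = circleMap c p.1 p.2 := by
    simp [circleMap, Complex.polarCoord_symm_apply, Complex.exp_mul_I]
  have hmem {p : ℝ × ℝ} (hp : 0 < p.1) : circleMap c p.1 p.2 ∈ ball c ρ ↔ p.1 < ρ := by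
    rw [mem_ball, dist_eq_norm, circleMap_sub_center, norm_circleMap_zero, abs_of_pos hp]
  have hint : IntegrableOn (fun p : ℝ × ℝ => p.1 * f (circleMap c p.1 p.2)) S
      (volume.prod volume) := by
    refine ContinuousOn.integrableOn_compact (isCompact_Icc.prod isCompact_Icc) ?_
      |>.mono_set (prod_mono Ioo_subset_Icc_self Ioo_subset_Icc_self)
    refine continuousOn_fst.mul (hf.comp (by fun_prop) fun p hp => ?_)
    rw [mem_closedBall, dist_eq_norm, circleMap_sub_center, norm_circleMap_zero,
      abs_of_nonneg hp.1.1]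
    exact hp.1.2
  calc ∫ z in ball c ρ, f z
      = ∫ w, (ball c ρ).indicator f (c + w) := by
        rw [integral_add_left_eq_self, integral_indicator measurableSet_ball]
    _ = ∫ p in polarCoord.target, p.1 • (ball c ρ).indicator f (circleMap c p.1 p.2) := by
        simp_rw [← Complex.integral_comp_polarCoord_symm, hcirc]
    _ = ∫ p in S, p.1 • (ball c ρ).indicator f (circleMap c p.1 p.2) := by
        refine (setIntegral_eq_of_subset_of_forall_sdiff_eq_zero (f := fun p : ℝ × ℝ =>
          p.1 • (ball c ρ).indicator f (circleMap c p.1 p.2))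
          polarCoord.open_target.measurableSet hS fun p ⟨hp, hpS⟩ => ?_)
        rw [polarCoord_target] at hp
        have : ¬ p.1 < ρ := fun h => hpS ⟨⟨hp.1, h⟩, hp.2⟩
        rw [indicator_of_notMem (by rwa [hmem hp.1]), smul_zero]
    _ = ∫ p in S, p.1 * f (circleMap c p.1 p.2) := by
        refine setIntegral_congr_fun (measurableSet_Ioo.prod measurableSet_Ioo) fun p hp => ?_
        rw [indicator_of_mem ((hmem hp.1.1).2 hp.1.2), smul_eq_mul]
    _ = ∫ t in Ioo 0 ρ, ∫ θ in Ioo (-π) π, t * f (circleMap c t θ) := by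
        rw [Measure.volume_eq_prod, setIntegral_prod _ hint]
    _ = ∫ t in (0)..ρ, 2 * π * t * circleAverage f c t := by
        simp_rw [← two_pi_mul_mul_circleAverage_eq_setIntegral_Ioo]
        rw [intervalIntegral.integral_of_le hρ, integral_Ioc_eq_integral_Ioo]

theorem mul_volume_real_ball_le_setIntegral_of_le_circleAverage {f : ℂ → ℝ} {c : ℂ} {ρ : ℝ}
    (hρ : 0 ≤ ρ) (hf : ContinuousOn f (closedBall c ρ))
    (hmean : ∀ t ∈ Ioc 0 ρ, f c ≤ circleAverage f c t) :
    f c * volume.real (ball c ρ) ≤ ∫ z in ball c ρ, f z := by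
  have hvol : volume.real (ball c ρ) = ∫ t in (0)..ρ, 2 * π * t := by
    rw [intervalIntegral.integral_const_mul, integral_id, Complex.volume_real_ball c hρ]
    ring
  have hcont : ContinuousOn (circleAverage f c) (Icc 0 ρ) := by
    refine (hf.mono fun z hz => ?_).circleAverage fun t ht => ht.1
    simpa [dist_eq_norm] using hz.2
  rw [integral_ball_eq_intervalIntegral_circleAverage hρ hf, hvol,
    ← intervalIntegral.integral_const_mul]
  refine intervalIntegral.integral_mono_on hρ
    ((continuous_const.mul (by fun_prop)).intervalIntegrable _ _)
    ((ContinuousOn.mul (by fun_prop) hcont).intervalIntegrable_of_Icc hρ) fun t ht => ?_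
  have ht0 : 0 ≤ t := ht.1
  have hle : f c ≤ circleAverage f c t := by
    rcases ht0.eq_or_lt with rfl | ht0
    · rw [circleAverage_zero]
    · exact hmean t ⟨ht0, ht.2⟩
  rw [mul_comm]
  gcongr

theorem sub_le_of_mul_measureReal_le_setIntegral {α : Type*} [MeasurableSpace α]
    {μ : Measure α} {S T : Set α} (hST : S ⊆ T) (hT : MeasurableSet T) (hTfin : μ T ≠ ⊤)
    (hS : 0 < μ.real S) {F G : α → ℝ} (hF : IntegrableOn F T μ) (hG : IntegrableOn G T μ)
    {c p : α} {m n : ℝ} (hFS : F c * μ.real S ≤ ∫ z in S, F z ∂μ)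
    (hGFT : (G p - F p) * μ.real T ≤ ∫ z in T, (G z - F z) ∂μ)
    (hFosc : ∀ z ∈ T, |F z - F p| ≤ m) (hGosc : ∀ z ∈ T, G z ≤ G p + n) :
    F c - F p ≤ n + 2 * m * (μ.real T / μ.real S - 1) := by
  have hSle : μ.real S ≤ μ.real T := measureReal_mono hST hTfin
  have hT0 : 0 < μ.real T := hS.trans_le hSle
  have hconst (a : ℝ) : IntegrableOn (fun _ => a) T μ := integrableOn_const hTfin
  -- `F - c₀` is nonnegative on `T`, so its integral over `S` is at most that over `T`.
  set c₀ := F p - m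
  set I := ∫ z in T, (F z - c₀) ∂μ with hIdef
  have hpos : ∀ z ∈ T, 0 ≤ F z - c₀ := fun z hz => by linarith [(abs_le.1 (hFosc z hz)).1]
  have hIS : (F c - c₀) * μ.real S ≤ I := by
    calc (F c - c₀) * μ.real S = F c * μ.real S - ∫ _ in S, c₀ ∂μ := by
          rw [setIntegral_const, smul_eq_mul]; ring
      _ ≤ ∫ z in S, (F z - c₀) ∂μ := by
          rw [integral_sub (hF.mono_set hST) ((hconst c₀).mono_set hST)]; linarith
      _ ≤ I := setIntegral_mono_set (hF.sub (hconst c₀))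
          ((ae_restrict_iff' hT).2 (ae_of_all _ hpos)) hST.eventuallyLE
  have hI2m : I ≤ 2 * m * μ.real T := by
    calc I ≤ ∫ _ in T, 2 * m ∂μ := setIntegral_mono_on (hF.sub (hconst c₀)) (hconst _) hT
          fun z hz => by linarith [(abs_le.1 (hFosc z hz)).2]
      _ = 2 * m * μ.real T := by rw [setIntegral_const, smul_eq_mul, mul_comm]
  have hInm : I ≤ (n + m) * μ.real T := by
    have hGT : ∫ z in T, G z ∂μ ≤ (G p + n) * μ.real T := by
      calc ∫ z in T, G z ∂μ ≤ ∫ _ in T, G p + n ∂μ := setIntegral_mono_on hG (hconst _) hT hGosc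
        _ = (G p + n) * μ.real T := by rw [setIntegral_const, smul_eq_mul, mul_comm]
    have hIeq : I = ∫ z in T, F z ∂μ - c₀ * μ.real T := by
      rw [hIdef, integral_sub hF (hconst c₀), setIntegral_const, smul_eq_mul, mul_comm]
    rw [integral_sub hG hF] at hGFT
    rw [hIeq]
    linarith
  -- Interpolate between the two bounds on `I` with weights `|S| / |T|` and `1 - |S| / |T|`.
  have hI : I ≤ (n + m) * μ.real S + 2 * m * (μ.real T - μ.real S) := by
    have h1 := mul_le_mul_of_nonneg_right hInm hS.le
    have h2 := mul_le_mul_of_nonneg_right hI2m (sub_nonneg.2 hSle)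
    refine le_of_mul_le_mul_right ?_ hT0
    nlinarith
  have hratio : (μ.real T / μ.real S - 1) * μ.real S = μ.real T - μ.real S := by
    field_simp
  refine le_of_mul_le_mul_right ?_ hS
  rw [add_mul, mul_assoc, hratio]
  linarith

lemma bddAbove_abs_sub_of_isBounded_image {X : Type*} {U : Set X} {g : X → ℝ}
    (hg : Bornology.IsBounded (g '' U)) :
    BddAbove {t : ℝ | ∃ x ∈ U, ∃ y ∈ U, t = |g x - g y|} := by
  obtain ⟨C, hC⟩ := isBounded_iff_forall_norm_le.1 hg
  refine ⟨2 * C, ?_⟩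
  rintro _ ⟨x, hx, y, hy, rfl⟩
  have hx' := hC _ (mem_image_of_mem g hx)
  have hy' := hC _ (mem_image_of_mem g hy)
  rw [Real.norm_eq_abs] at hx' hy'
  linarith [abs_sub (g x) (g y)]

section ModulusOfContinuity

variable {X : Type*} [PseudoMetricSpace X] {U : Set X} {g : X → ℝ} {r : ℝ}

lemma modCont_nonneg : 0 ≤ modCont U g r :=
  Real.sSup_nonneg fun _ ⟨_, _, _, _, _, ht⟩ => ht ▸ abs_nonneg _

lemma abs_sub_le_modCont (hg : Bornology.IsBounded (g '' U)) {x y : X} (hx : x ∈ U)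
    (hy : y ∈ U) (hxy : dist x y ≤ r) : |g x - g y| ≤ modCont U g r :=
  le_csSup ((bddAbove_abs_sub_of_isBounded_image hg).mono <| by
    rintro _ ⟨x, hx, y, hy, -, rfl⟩; exact ⟨x, hx, y, hy, rfl⟩) ⟨x, hx, y, hy, hxy, rfl⟩

lemma modCont_le_oscOn (hg : Bornology.IsBounded (g '' U)) : modCont U g r ≤ oscOn U g :=
  Real.sSup_le (fun _ ⟨x, hx, y, hy, _, ht⟩ =>
      le_csSup (bddAbove_abs_sub_of_isBounded_image hg) ⟨x, hx, y, hy, ht⟩)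
    (Real.sSup_nonneg fun _ ⟨_, _, _, _, ht⟩ => ht ▸ abs_nonneg _)

lemma modCont_le_of_sub_le {C : ℝ} (hC : 0 ≤ C)
    (h : ∀ x ∈ U, ∀ y ∈ U, dist x y ≤ r → g x - g y ≤ C) : modCont U g r ≤ C :=
  Real.sSup_le (fun _ ⟨x, hx, y, hy, hxy, ht⟩ => ht ▸ abs_sub_le_iff.2
    ⟨h x hx y hy hxy, h y hy x hx (dist_comm x y ▸ hxy)⟩) hC

end ModulusOfContinuity

section Plurisubharmonic

variable {k : ℕ} {Ω : Set (EuclideanSpace ℂ (Fin k))} {u : EuclideanSpace ℂ (Fin k) → ℝ}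

lemma IsPshOn.le_circleAverage_comp_line (hu : IsPshOn Ω u) (a b : EuclideanSpace ℂ (Fin k))
    {c : ℂ} {t : ℝ} (ht : 0 < t) (hdisc : ∀ z ∈ closedBall c t, a + z • b ∈ Ω) :
    u (a + c • b) ≤ circleAverage (fun z => u (a + z • b)) c t := by
  have := hu a b c t ht fun z hz => hdisc z (by rwa [mem_closedBall, dist_eq_norm])
  simpa [circleAverage_def, circleMap] using this

lemma IsPshOn.mul_volume_real_ball_le_setIntegral_comp_line (hu : IsPshOn Ω u)
    (hcont : ContinuousOn u Ω) (a b : EuclideanSpace ℂ (Fin k)) {c : ℂ} {ρ : ℝ} (hρ : 0 < ρ)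
    (hdisc : ∀ z ∈ closedBall c ρ, a + z • b ∈ Ω) :
    u (a + c • b) * volume.real (ball c ρ) ≤ ∫ z in ball c ρ, u (a + z • b) :=
  mul_volume_real_ball_le_setIntegral_of_le_circleAverage hρ.le
    (hcont.comp (by fun_prop) hdisc) fun _ ht => hu.le_circleAverage_comp_line a b ht.1
      fun z hz => hdisc z (closedBall_subset_closedBall ht.2 hz)

end Plurisubharmonic

lemma ContinuousOn.isBounded_image_ball {E : Type*} [PseudoMetricSpace E] [ProperSpace E]
    {w : E → ℝ} {c : E} {r R : ℝ} (hw : ContinuousOn w (ball c R)) (hrR : r < R) :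
    Bornology.IsBounded (w '' ball c r) :=
  ((isCompact_closedBall c r).image_of_continuousOn
    (hw.mono (closedBall_subset_ball hrR))).isBounded.subset (image_mono ball_subset_closedBall)

lemma sq_div_sub_one_sq_sub_one_le {Q : ℝ} (hQ : 2 ≤ Q) : Q ^ 2 / (Q - 1) ^ 2 - 1 ≤ 6 / Q := by
  have hQ1 : 0 < (Q - 1) ^ 2 := by nlinarith
  rw [div_sub_one hQ1.ne', div_le_div_iff₀ hQ1 (by linarith)]
  nlinarith

section UnitBall

variable {k : ℕ} {u v : EuclideanSpace ℂ (Fin k) → ℝ}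

theorem IsPshOn.sub_le_modCont_add_of_line (hu_cont : ContinuousOn u (ball 0 3))
    (hv_cont : ContinuousOn v (ball 0 3)) (hu : IsPshOn (ball 0 3) u)
    (hvu : IsPshOn (ball 0 3) (v - u)) {x b : EuclideanSpace ℂ (Fin k)} {Q ρ : ℝ}
    (hx : x ∈ ball 0 1) (hρ1 : ρ ≤ 1) (hQ : 2 ≤ Q) (hb : Q * ‖b‖ ≤ ρ) :
    u (x + b) - u x ≤
      modCont (ball 0 2) v ρ + 2 * modCont (ball 0 2) u ρ * (Q ^ 2 / (Q - 1) ^ 2 - 1) := by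
  set ℓ : ℂ → EuclideanSpace ℂ (Fin k) := fun z => x + z • b
  have hℓx {z : ℂ} (hz : z ∈ closedBall 0 Q) : dist (ℓ z) x ≤ ρ := by
    rw [mem_closedBall_zero_iff] at hz
    rw [dist_eq_norm, add_sub_cancel_left, norm_smul]
    exact (mul_le_mul_of_nonneg_right hz (norm_nonneg b)).trans hb
  have hℓ2 {z : ℂ} (hz : z ∈ closedBall 0 Q) : ℓ z ∈ ball 0 2 := by
    rw [mem_ball] at hx ⊢
    linarith [dist_triangle (ℓ z) x 0, hℓx hz]
  have hℓ3 {z : ℂ} (hz : z ∈ closedBall 0 Q) : ℓ z ∈ ball 0 3 :=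
    ball_subset_ball (by norm_num) (hℓ2 hz)
  have hℓ0 : ℓ 0 = x := by simp [ℓ]
  have hint {w : EuclideanSpace ℂ (Fin k) → ℝ} (hw : ContinuousOn w (ball 0 3)) :
      IntegrableOn (w ∘ ℓ) (ball 0 Q) :=
    ((hw.comp (by fun_prop) fun _ hz => hℓ3 hz).integrableOn_compact
      (isCompact_closedBall 0 Q)).mono_set ball_subset_closedBall
  have hosc {w : EuclideanSpace ℂ (Fin k) → ℝ} (hw : ContinuousOn w (ball 0 3)) (z : ℂ)
      (hz : z ∈ ball 0 Q) : |w (ℓ z) - w (ℓ 0)| ≤ modCont (ball 0 2) w ρ := by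
    have hz' := ball_subset_closedBall hz
    rw [hℓ0]
    exact abs_sub_le_modCont (hw.isBounded_image_ball (by norm_num)) (hℓ2 hz')
      (ball_subset_ball (by norm_num) hx) (hℓx hz')
  have hR : 0 < Q - 1 := by linarith
  have hmain := sub_le_of_mul_measureReal_le_setIntegral (S := ball 1 (Q - 1))
    (F := u ∘ ℓ) (G := v ∘ ℓ) (c := 1) (p := 0) (ball_subset_ball' (by simp))
    measurableSet_ball measure_ball_lt_top.ne
    (by rw [Complex.volume_real_ball _ hR.le]; positivity) (hint hu_cont) (hint hv_cont)
    (hu.mul_volume_real_ball_le_setIntegral_comp_line hu_cont x b hR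
      fun z hz => hℓ3 (closedBall_subset_closedBall' (by simp) hz))
    (hvu.mul_volume_real_ball_le_setIntegral_comp_line (hv_cont.sub hu_cont) x b
      (by linarith) fun _ hz => hℓ3 hz)
    (hosc hu_cont) fun z hz => show v (ℓ z) ≤ v (ℓ 0) + modCont (ball 0 2) v ρ from
      by linarith [(abs_le.1 (hosc hv_cont z hz)).2]
  have hℓ1 : ℓ 1 = x + b := by simp [ℓ]
  rwa [Function.comp_apply, Function.comp_apply, hℓ1, hℓ0, Complex.volume_real_ball _ hR.le,
    Complex.volume_real_ball _ (by linarith), mul_div_mul_left _ _ pi_ne_zero] at hmain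

theorem IsPshOn.sub_le_modCont_add (hu_cont : ContinuousOn u (ball 0 3))
    (hv_cont : ContinuousOn v (ball 0 3)) (hu : IsPshOn (ball 0 3) u)
    (hvu : IsPshOn (ball 0 3) (v - u)) {s r : ℝ} (hs0 : 0 < s) (hs1 : s ≤ 1) (hr0 : 0 < r)
    (hr1 : r ≤ 1) {x y : EuclideanSpace ℂ (Fin k)} (hx : x ∈ ball 0 1) (hy : y ∈ ball 0 1)
    (hxy : dist x y ≤ r) :
    u y - u x ≤
      modCont (ball 0 2) v (r ^ s) + 12 * modCont (ball 0 2) u (r ^ s) * r ^ (1 - s) := by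
  -- The disc `|z| ≤ Q = r ^ s / r` of the line `z ↦ x + z • (y - x)` stays within `r ^ s` of `x`.
  set Q := r ^ (s - 1)
  have hμ : 0 ≤ modCont (ball 0 2) u (r ^ s) := modCont_nonneg
  have hν : 0 ≤ modCont (ball 0 2) v (r ^ s) := modCont_nonneg
  have hQ1 : 1 ≤ Q := Real.one_le_rpow_of_pos_of_le_one_of_nonpos hr0 hr1 (by linarith)
  have hQr : Q * r = r ^ s := by rw [← Real.rpow_add_one hr0.ne', sub_add_cancel]
  have hQinv : r ^ (1 - s) = Q⁻¹ := by rw [← Real.rpow_neg hr0.le, neg_sub]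
  rw [hQinv]
  rcases lt_or_ge Q 2 with hQ2 | hQ2
  · -- For `Q < 2` the error term `12 m / Q` already dominates the trivial bound `m`.
    have hdist : dist y x ≤ r ^ s := by rw [dist_comm]; nlinarith
    have h12 : ball (0 : EuclideanSpace ℂ (Fin k)) 1 ⊆ ball 0 2 := ball_subset_ball (by norm_num)
    have := (abs_le.1 (abs_sub_le_modCont (hu_cont.isBounded_image_ball (by norm_num : (2 : ℝ) < 3))
      (h12 hy) (h12 hx) hdist)).2
    have : 1 ≤ 12 * Q⁻¹ := by
      rw [← div_eq_mul_inv, le_div_iff₀ (by linarith)]; linarith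
    nlinarith
  · have hline := hu.sub_le_modCont_add_of_line hu_cont hv_cont hvu (b := y - x) hx
      (Real.rpow_le_one hr0.le hr1 hs0.le) hQ2
      (by rw [← dist_eq_norm, dist_comm, ← hQr]; gcongr)
    rw [add_sub_cancel] at hline
    calc u y - u x ≤ _ := hline
      _ ≤ _ + 2 * _ * (6 / Q) := by gcongr; exact sq_div_sub_one_sq_sub_one_le hQ2
      _ = _ := by ring

end UnitBall

theorem stmt_1_general (k : ℕ) (s : ℝ) (hs0 : 0 < s) (hs1 : s ≤ 1) :
    ∃ A : ℝ, 0 < A ∧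
      ∀ u v : EuclideanSpace ℂ (Fin k) → ℝ,
        ContinuousOn u (ball 0 3) → ContinuousOn v (ball 0 3) →
        IsPshOn (ball 0 3) u → IsPshOn (ball 0 3) v → IsPshOn (ball 0 3) (v - u) →
        ∀ r : ℝ, 0 < r → r ≤ 1 / 2 →
          modCont (ball 0 1) u r ≤
              modCont (ball 0 2) v (r ^ s) +
                A * modCont (ball 0 2) u (r ^ s) * r ^ (1 - s) ∧
          modCont (ball 0 1) u r ≤
              modCont (ball 0 2) v (r ^ s) + A * oscOn (ball 0 2) u * r ^ (1 - s) := by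
  refine ⟨12, by norm_num, fun u v hu_cont hv_cont hu _ hvu r hr0 hr2 => ?_⟩
  have hμ : 0 ≤ modCont (ball (0 : EuclideanSpace ℂ (Fin k)) 2) u (r ^ s) := modCont_nonneg
  have hν : 0 ≤ modCont (ball (0 : EuclideanSpace ℂ (Fin k)) 2) v (r ^ s) := modCont_nonneg
  have hmod : modCont (ball 0 1) u r ≤
      modCont (ball 0 2) v (r ^ s) + 12 * modCont (ball 0 2) u (r ^ s) * r ^ (1 - s) := by
    refine modCont_le_of_sub_le (by positivity) fun x hx y hy hxy => ?_
    exact hu.sub_le_modCont_add hu_cont hv_cont hvu hs0 hs1 hr0 (by linarith) hy hx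
      (dist_comm x y ▸ hxy)
  refine ⟨hmod, hmod.trans ?_⟩
  gcongr
  exact modCont_le_oscOn (hu_cont.isBounded_image_ball (by norm_num))

/-- Proposition 2.7 of the paper. If `u`, `v` and `v - u` are continuous
plurisubharmonic functions on `B(0,3) ⊆ ℂ^k` (encoding `dd^c u ≤ dd^c v`), then for `0 < s ≤ 1`
there is `A = A(k, s) > 0` such that for all `0 < r ≤ 1/2`:
`m_{B(0,1)}(u, r) ≤ m_{B(0,2)}(v, r^s) + A m_{B(0,2)}(u, r^s) r^{1-s}`, and in particular
`m_{B(0,1)}(u, r) ≤ m_{B(0,2)}(v, r^s) + A Ω_{B(0,2)}(u) r^{1-s}`. -/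
theorem stmt_1 (k : ℕ) (hk : 1 ≤ k) (s : ℝ) (hs0 : 0 < s) (hs1 : s ≤ 1) :
    ∃ A : ℝ, 0 < A ∧
      ∀ u v : EuclideanSpace ℂ (Fin k) → ℝ,
        ContinuousOn u (ball 0 3) → ContinuousOn v (ball 0 3) →
        IsPshOn (ball 0 3) u → IsPshOn (ball 0 3) v → IsPshOn (ball 0 3) (v - u) →
        ∀ r : ℝ, 0 < r → r ≤ 1 / 2 →
          modCont (ball 0 1) u r ≤
              modCont (ball 0 2) v (r ^ s) +
                A * modCont (ball 0 2) u (r ^ s) * r ^ (1 - s) ∧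
          modCont (ball 0 1) u r ≤
              modCont (ball 0 2) v (r ^ s) + A * oscOn (ball 0 2) u * r ^ (1 - s) :=
  stmt_1_general k s hs0 hs1
end

section
/- Let k ≥ 1, let v be a continuous plurisubharmonic function on the open ball B(0,3) ⊆ ℂ^k, and let M > 0. Then the family F of all continuous functions u : B(0,3) → ℝ such that v + u and v − u are plurisubharmonic and Ω_{B(0,2)}(u) ≤ M is uniformly equicontinuous on B(0,1): for every ε > 0 there exists δ > 0 such that |u(x) − u(y)| ≤ ε for every u ∈ F and all x, y ∈ B(0,1) with |x − y| ≤ δ. -/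
/-!
On the complex line through `x` and `y`, the functions `v + u` and `v - u` are subharmonic, so the
circle averages of `u` differ from its value at the centre by at most the oscillation of `v` on the
circle, which is uniformly small on small circles since `v` is uniformly continuous. Integrating
over radii, the same holds for the averages of `u` over discs of a fixed radius `R`. Two such discs
centred at distance `d` differ by a set of area `O(R d)`, on which `u` varies by at most the
oscillation bound `M`; hence `|u x - u y|` is at most twice the error plus `O(M d / R)`.
-/

open Metric

open MeasureTheory Real Set

lemma abs_setIntegral_sub_setIntegral_le {α : Type*} [MeasurableSpace α] {μ : Measure α}
    {s t : Set α} {f : α → ℝ} {m C : ℝ} (hs : MeasurableSet s) (ht : MeasurableSet t)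
    (hμ : μ s = μ t) (hfin : μ s ≠ ⊤) (hf : IntegrableOn f (s ∪ t) μ)
    (hC : ∀ x ∈ s ∪ t, |f x - m| ≤ C) :
    |(∫ x in s, f x ∂μ) - ∫ x in t, f x ∂μ| ≤ C * (μ.real (s \ t) + μ.real (t \ s)) := by
  have hfin' : μ t ≠ ⊤ := hμ ▸ hfin
  have hfs : IntegrableOn (fun x => f x - m) s μ :=
    (hf.mono_set subset_union_left).sub (integrableOn_const hfin)
  have hft : IntegrableOn (fun x => f x - m) t μ :=
    (hf.mono_set subset_union_right).sub (integrableOn_const hfin')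
  have hcenter : (∫ x in s, f x ∂μ) - ∫ x in t, f x ∂μ
      = (∫ x in s, (f x - m) ∂μ) - ∫ x in t, (f x - m) ∂μ := by
    rw [integral_sub (hf.mono_set subset_union_left) (integrableOn_const hfin),
      integral_sub (hf.mono_set subset_union_right) (integrableOn_const hfin'),
      setIntegral_const, setIntegral_const, measureReal_def, measureReal_def, hμ]
    ring
  have hsplit : (∫ x in s, (f x - m) ∂μ) - ∫ x in t, (f x - m) ∂μ
      = (∫ x in s \ t, (f x - m) ∂μ) - ∫ x in t \ s, (f x - m) ∂μ := by
    rw [← integral_inter_add_sdiff ht hfs, ← integral_inter_add_sdiff hs hft, inter_comm]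
    ring
  have hst : |∫ x in s \ t, (f x - m) ∂μ| ≤ C * μ.real (s \ t) := by
    rw [← Real.norm_eq_abs]
    exact norm_setIntegral_le_of_norm_le_const ((measure_mono sdiff_subset).trans_lt hfin.lt_top)
      fun x hx => hC x (Or.inl hx.1)
  have hts : |∫ x in t \ s, (f x - m) ∂μ| ≤ C * μ.real (t \ s) := by
    rw [← Real.norm_eq_abs]
    exact norm_setIntegral_le_of_norm_le_const ((measure_mono sdiff_subset).trans_lt hfin'.lt_top)
      fun x hx => hC x (Or.inr hx.1)
  rw [hcenter, hsplit, mul_add]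
  exact (abs_sub _ _).trans (add_le_add hst hts)

lemma integral_Ioo_neg_pi_pi_circleMap {E : Type*} [NormedAddCommGroup E] [NormedSpace ℝ E]
    (f : ℂ → E) (c : ℂ) (R : ℝ) :
    ∫ θ in Ioo (-π) π, f (circleMap c R θ) = (2 * π) • circleAverage f c R := by
  rw [circleAverage_def, smul_inv_smul₀ two_pi_pos.ne', ← integral_Ioc_eq_integral_Ioo,
    ← intervalIntegral.integral_of_le (by linarith [pi_pos])]
  have := ((periodic_circleMap c R).comp f).intervalIntegral_add_eq (-π) 0
  rwa [show -π + 2 * π = π by ring, zero_add] at this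

lemma add_polarCoord_symm_eq_circleMap (c : ℂ) (p : ℝ × ℝ) :
    c + Complex.polarCoord.symm p = circleMap c p.1 p.2 := by
  simp [circleMap, Complex.exp_mul_I, Complex.ofReal_cos, Complex.ofReal_sin]

theorem integral_closedBall_eq_integral_circleAverage {E : Type*} [NormedAddCommGroup E]
    [NormedSpace ℝ E] [CompleteSpace E] {f : ℂ → E} {c : ℂ} {R : ℝ} (hR : 0 ≤ R)
    (hf : ContinuousOn f (closedBall c R)) :
    ∫ z in closedBall c R, f z = ∫ ρ in 0..R, (2 * π * ρ) • circleAverage f c ρ := by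
  set F : ℝ × ℝ → E := fun p => p.1 • f (circleMap c p.1 p.2)
  have hF : IntegrableOn F (Icc 0 R ×ˢ Icc (-π) π) := by
    refine ContinuousOn.integrableOn_compact (isCompact_Icc.prod isCompact_Icc) ?_
    refine continuous_fst.continuousOn.smul (hf.comp (by fun_prop) ?_)
    rintro ⟨ρ, θ⟩ ⟨hρ, -⟩
    exact closedBall_subset_closedBall hρ.2 (circleMap_mem_closedBall c hρ.1 θ)
  calc ∫ z in closedBall c R, f z
      = ∫ z, (closedBall 0 R).indicator (fun z => f (c + z)) z := by
        rw [← integral_indicator measurableSet_closedBall,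
          ← integral_add_left_eq_self (μ := volume) (fun z => (closedBall c R).indicator f z) c]
        congr 1; ext z
        simp [indicator]
    _ = ∫ p in Complex.polarCoord.target,
          p.1 • (closedBall 0 R).indicator (fun z => f (c + z)) (Complex.polarCoord.symm p) :=
        (Complex.integral_comp_polarCoord_symm _).symm
    _ = ∫ p in Complex.polarCoord.target, (Ioc 0 R ×ˢ Ioo (-π) π).indicator F p := by
        refine setIntegral_congr_fun Complex.polarCoord.open_target.measurableSet ?_
        rintro ⟨ρ, θ⟩ ⟨hρ, hθ⟩
        have hmem : Complex.polarCoord.symm (ρ, θ) ∈ closedBall 0 R ↔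
            (ρ, θ) ∈ Ioc 0 R ×ˢ Ioo (-π) π := by
          simp [abs_of_pos (mem_Ioi.mp hρ), mem_Ioi.mp hρ, hθ]
        dsimp only
        by_cases h : (ρ, θ) ∈ Ioc 0 R ×ˢ Ioo (-π) π
        · rw [indicator_of_mem h, indicator_of_mem (hmem.mpr h), add_polarCoord_symm_eq_circleMap]
        · rw [indicator_of_notMem h, indicator_of_notMem (mt hmem.mp h), smul_zero]
    _ = ∫ p in Ioc 0 R ×ˢ Ioo (-π) π, F p := by
        rw [setIntegral_indicator (measurableSet_Ioc.prod measurableSet_Ioo),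
          Complex.polarCoord_target, inter_eq_right.mpr (prod_mono Ioc_subset_Ioi_self subset_rfl)]
    _ = ∫ ρ in Ioc 0 R, ∫ θ in Ioo (-π) π, F (ρ, θ) := by
        rw [Measure.volume_eq_prod] at hF ⊢
        exact setIntegral_prod F (hF.mono_set (prod_mono Ioc_subset_Icc_self Ioo_subset_Icc_self))
    _ = ∫ ρ in 0..R, (2 * π * ρ) • circleAverage f c ρ := by
        simp only [F, integral_smul, integral_Ioo_neg_pi_pi_circleMap, smul_smul,
          intervalIntegral.integral_of_le hR, mul_comm _ (2 * π)]

lemma Complex.measureReal_closedBall (c : ℂ) {R : ℝ} (hR : 0 ≤ R) :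
    volume.real (closedBall c R) = π * R ^ 2 := by
  simp [measureReal_def, Complex.volume_closedBall, ENNReal.toReal_ofReal hR, mul_comm]

lemma Complex.measureReal_ball (c : ℂ) (r : ℝ) :
    volume.real (ball c r) = π * max r 0 ^ 2 := by
  simp [measureReal_def, Complex.volume_ball, ENNReal.toReal_ofReal', mul_comm]

lemma abs_setIntegral_closedBall_sub_le {g : ℂ → ℝ} {c : ℂ} {R η : ℝ} (hR : 0 ≤ R)
    (hg : ContinuousOn g (closedBall c R))
    (hmean : ∀ ρ ∈ Ioc 0 R, |circleAverage g c ρ - g c| ≤ η) :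
    |(∫ z in closedBall c R, g z) - π * R ^ 2 * g c| ≤ π * R ^ 2 * η := by
  have hfin : volume (closedBall c R) < ⊤ := measure_closedBall_lt_top
  have hsub : (∫ z in closedBall c R, g z) - π * R ^ 2 * g c
      = ∫ z in closedBall c R, (g z - g c) := by
    rw [integral_sub (hg.integrableOn_compact (isCompact_closedBall c R))
      (integrableOn_const hfin.ne), setIntegral_const, Complex.measureReal_closedBall c hR,
      smul_eq_mul]
  rw [hsub, ← Real.norm_eq_abs, integral_closedBall_eq_integral_circleAverage
    (f := fun z => g z - g c) hR (hg.sub continuousOn_const)]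
  calc ‖∫ ρ in 0..R, (2 * π * ρ) • circleAverage (fun z => g z - g c) c ρ‖
      ≤ ∫ ρ in 0..R, 2 * π * ρ * η := by
        refine intervalIntegral.norm_integral_le_of_norm_le hR
          (Filter.Eventually.of_forall fun ρ hρ => ?_)
          (Continuous.intervalIntegrable (by fun_prop) _ _)
        have hρ0 : 0 < ρ := hρ.1
        have hsphere : sphere c ρ ⊆ closedBall c R :=
          sphere_subset_closedBall.trans (closedBall_subset_closedBall hρ.2)
        have hint : CircleIntegrable g c ρ := (hg.mono hsphere).circleIntegrable hρ0.le
        rw [circleAverage_fun_sub hint (circleIntegrable_const _ c ρ), circleAverage_const,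
          norm_smul, Real.norm_eq_abs, abs_of_pos (by positivity)]
        exact mul_le_mul_of_nonneg_left (hmean ρ hρ) (by positivity)
    _ = π * R ^ 2 * η := by
        rw [intervalIntegral.integral_mul_const, intervalIntegral.integral_const_mul, integral_id]
        ring

lemma measureReal_closedBall_sdiff_closedBall_le (a b : ℂ) {R : ℝ} (hR : 0 ≤ R) :
    volume.real (closedBall a R \ closedBall b R) ≤ 2 * π * R * dist a b := by
  have hd := dist_nonneg (x := a) (y := b)
  have hsub : closedBall a R \ closedBall b R ⊆ closedBall a R \ ball a (R - dist a b) := by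
    refine sdiff_subset_sdiff_right fun z hz => ?_
    rw [mem_ball] at hz
    rw [mem_closedBall]
    linarith [dist_triangle z a b]
  calc volume.real (closedBall a R \ closedBall b R)
      ≤ volume.real (closedBall a R \ ball a (R - dist a b)) :=
        measureReal_mono hsub ((measure_mono sdiff_subset).trans_lt measure_closedBall_lt_top).ne
    _ = π * R ^ 2 - π * max (R - dist a b) 0 ^ 2 := by
        rw [measureReal_sdiff (ball_subset_closedBall.trans (closedBall_subset_closedBall
          (by linarith))) measurableSet_ball measure_closedBall_lt_top.ne,
          Complex.measureReal_closedBall a hR, Complex.measureReal_ball]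
    _ ≤ 2 * π * R * dist a b := by
        rcases le_total (R - dist a b) 0 with h | h
        · rw [max_eq_right h]
          nlinarith [mul_nonneg (mul_nonneg pi_pos.le hR) (by linarith : 0 ≤ 2 * dist a b - R)]
        · rw [max_eq_left h]
          nlinarith [mul_nonneg pi_pos.le (sq_nonneg (dist a b))]

lemma abs_sub_le_of_abs_circleAverage_sub_le {g : ℂ → ℝ} {a b : ℂ} {R η C : ℝ} (hR : 0 < R)
    (hab : dist a b ≤ R) (hg : ContinuousOn g (closedBall a (2 * R)))
    (hC : ∀ z ∈ closedBall a (2 * R), |g z - g a| ≤ C)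
    (hmean : ∀ c ∈ closedBall a R, ∀ ρ ∈ Ioc 0 R, |circleAverage g c ρ - g c| ≤ η) :
    |g a - g b| ≤ 2 * η + 4 * C * dist a b / R := by
  have hDa : closedBall a R ⊆ closedBall a (2 * R) := closedBall_subset_closedBall (by linarith)
  have hDb : closedBall b R ⊆ closedBall a (2 * R) := closedBall_subset_closedBall' (by
    rw [dist_comm]; linarith)
  have hC0 : 0 ≤ C := (abs_nonneg _).trans (hC a (mem_closedBall_self (by linarith)))
  have ha := abs_setIntegral_closedBall_sub_le hR.le (hg.mono hDa)
    (hmean a (mem_closedBall_self hR.le))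
  have hb := abs_setIntegral_closedBall_sub_le hR.le (hg.mono hDb)
    (hmean b (mem_closedBall'.mpr hab))
  have hcompare := abs_setIntegral_sub_setIntegral_le (μ := volume) (m := g a)
    measurableSet_closedBall measurableSet_closedBall
    (by simp only [Complex.volume_closedBall]) measure_closedBall_lt_top.ne
    ((hg.mono (union_subset hDa hDb)).integrableOn_compact
      ((isCompact_closedBall a R).union (isCompact_closedBall b R)))
    (fun z hz => hC z (union_subset hDa hDb hz))
  have hsym := add_le_add (measureReal_closedBall_sdiff_closedBall_le a b hR.le)
    (measureReal_closedBall_sdiff_closedBall_le b a hR.le)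
  rw [dist_comm b a] at hsym
  have key : π * R ^ 2 * |g a - g b| ≤ π * R ^ 2 * (2 * η + 4 * C * dist a b / R) := by
    calc π * R ^ 2 * |g a - g b| = |π * R ^ 2 * (g a - g b)| := by
          rw [abs_mul, abs_of_pos (by positivity : 0 < π * R ^ 2)]
      _ = |(π * R ^ 2 * g a - ∫ z in closedBall a R, g z)
            + ((∫ z in closedBall a R, g z) - ∫ z in closedBall b R, g z)
            + ((∫ z in closedBall b R, g z) - π * R ^ 2 * g b)| := by
          congr 1
          ring
      _ ≤ π * R ^ 2 * η + C * (4 * π * R * dist a b) + π * R ^ 2 * η := by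
          refine (abs_add_three _ _ _).trans (add_le_add_three ?_ ?_ hb)
          · rwa [abs_sub_comm]
          · exact hcompare.trans (by nlinarith)
      _ = π * R ^ 2 * (2 * η + 4 * C * dist a b / R) := by
          field_simp
          ring
  exact le_of_mul_le_mul_left key (by positivity)

lemma abs_circleAverage_sub_le_of_le_circleAverage_add_sub {f g : ℂ → ℝ} {c : ℂ} {ρ η : ℝ}
    (hf : CircleIntegrable f c ρ) (hg : CircleIntegrable g c ρ)
    (hadd : f c + g c ≤ circleAverage (f + g) c ρ) (hsub : f c - g c ≤ circleAverage (f - g) c ρ)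
    (hη : circleAverage f c ρ ≤ f c + η) :
    |circleAverage g c ρ - g c| ≤ η := by
  rw [circleAverage_add hf hg] at hadd
  rw [circleAverage_sub hf hg] at hsub
  rw [abs_le]
  constructor <;> linarith

lemma exists_norm_le_one_add_smul_eq {F : Type*} [NormedAddCommGroup F] [NormedSpace ℂ F]
    (x y : F) : ∃ b : F, ‖b‖ ≤ 1 ∧ x + (dist x y : ℂ) • b = y := by
  rcases eq_or_ne x y with rfl | hxy
  · exact ⟨0, by simp⟩
  have hd : (dist x y : ℂ) ≠ 0 := Complex.ofReal_ne_zero.mpr (dist_ne_zero.mpr hxy)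
  refine ⟨(dist x y : ℂ)⁻¹ • (y - x), ?_, ?_⟩
  · rw [norm_smul, norm_inv, Complex.norm_real, Real.norm_of_nonneg dist_nonneg,
      dist_eq_norm', inv_mul_cancel₀ (norm_ne_zero_iff.mpr (sub_ne_zero.mpr hxy.symm))]
  · rw [smul_smul, mul_inv_cancel₀ hd, one_smul, add_sub_cancel]

section Psh

variable {k : ℕ}

lemma IsPshOn.le_circleAverage {Ω : Set (EuclideanSpace ℂ (Fin k))}
    {u : EuclideanSpace ℂ (Fin k) → ℝ} (hu : IsPshOn Ω u) {a b : EuclideanSpace ℂ (Fin k)}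
    {c : ℂ} {ρ : ℝ} (hρ : 0 < ρ) (hD : ∀ z ∈ closedBall c ρ, a + z • b ∈ Ω) :
    u (a + c • b) ≤ circleAverage (fun z => u (a + z • b)) c ρ := by
  rw [circleAverage_def, smul_eq_mul, ← one_div]
  exact hu a b c ρ hρ fun z hz => hD z (mem_closedBall_iff_norm.mpr hz)

lemma abs_circleAverage_sub_le_of_isPshOn {Ω : Set (EuclideanSpace ℂ (Fin k))}
    {u v : EuclideanSpace ℂ (Fin k) → ℝ} {x b : EuclideanSpace ℂ (Fin k)} {c : ℂ} {ρ η : ℝ}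
    (hρ : 0 < ρ) (hD : ∀ z ∈ closedBall c ρ, x + z • b ∈ Ω)
    (hu : ContinuousOn u Ω) (hv : ContinuousOn v Ω)
    (hvu : IsPshOn Ω (v + u)) (hvmu : IsPshOn Ω (v - u))
    (hv_circle : ∀ z ∈ sphere c ρ, v (x + z • b) ≤ v (x + c • b) + η) :
    |circleAverage (fun z => u (x + z • b)) c ρ - u (x + c • b)| ≤ η := by
  have hint : ∀ w : EuclideanSpace ℂ (Fin k) → ℝ, ContinuousOn w Ω →
      CircleIntegrable (fun z => w (x + z • b)) c ρ := fun w hw =>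
    (hw.comp (by fun_prop : Continuous fun z : ℂ => x + z • b).continuousOn
      fun z hz => hD z (sphere_subset_closedBall hz)).circleIntegrable hρ.le
  refine abs_circleAverage_sub_le_of_le_circleAverage_add_sub (hint v hv) (hint u hu)
    (hvu.le_circleAverage hρ hD) (hvmu.le_circleAverage hρ hD) ?_
  exact circleAverage_mono_on_of_le_circle (hint v hv) fun z hz =>
    hv_circle z (by rwa [abs_of_pos hρ] at hz)

lemma abs_sub_le_of_isPshOn_add_of_isPshOn_sub {Ω : Set (EuclideanSpace ℂ (Fin k))}
    {u v : EuclideanSpace ℂ (Fin k) → ℝ} {x y : EuclideanSpace ℂ (Fin k)} {R η M : ℝ}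
    (hR : 0 < R) (hxy : dist x y ≤ R) (hΩ : closedBall x (2 * R) ⊆ Ω)
    (hu : ContinuousOn u Ω) (hv : ContinuousOn v Ω)
    (hvu : IsPshOn Ω (v + u)) (hvmu : IsPshOn Ω (v - u))
    (hv_mod : ∀ p ∈ closedBall x (2 * R), ∀ q ∈ closedBall x (2 * R),
      dist p q ≤ R → dist (v p) (v q) ≤ η)
    (hu_osc : ∀ p ∈ closedBall x (2 * R), |u p - u x| ≤ M) :
    |u x - u y| ≤ 2 * η + 4 * M * dist x y / R := by
  obtain ⟨b, hb, hy⟩ := exists_norm_le_one_add_smul_eq x y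
  set ℓ : ℂ → EuclideanSpace ℂ (Fin k) := fun z => x + z • b
  have hℓ : Continuous ℓ := by fun_prop
  have hℓ_dist : ∀ z w, dist (ℓ z) (ℓ w) ≤ dist z w := fun z w => by
    rw [dist_add_left, dist_eq_norm, dist_eq_norm, ← sub_smul, norm_smul]
    exact mul_le_of_le_one_right (norm_nonneg _) hb
  have hℓ0 : ℓ 0 = x := by simp [ℓ]
  have hℓ_mem : ∀ z ∈ closedBall (0 : ℂ) (2 * R), ℓ z ∈ closedBall x (2 * R) := fun z hz =>
    hℓ0 ▸ (hℓ_dist z 0).trans hz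
  have hu_ℓ : ContinuousOn (u ∘ ℓ) (closedBall 0 (2 * R)) :=
    hu.comp hℓ.continuousOn fun z hz => hΩ (hℓ_mem z hz)
  have hmean : ∀ c ∈ closedBall (0 : ℂ) R, ∀ ρ ∈ Ioc 0 R,
      |circleAverage (u ∘ ℓ) c ρ - u (ℓ c)| ≤ η := by
    intro c hc ρ hρ
    have hdisc : closedBall c ρ ⊆ closedBall 0 (2 * R) := closedBall_subset_closedBall' (by
      rw [mem_closedBall] at hc; linarith [hρ.2])
    refine abs_circleAverage_sub_le_of_isPshOn hρ.1 (fun z hz => hΩ (hℓ_mem z (hdisc hz)))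
      hu hv hvu hvmu fun z hz => ?_
    have := hv_mod _ (hℓ_mem z (hdisc (sphere_subset_closedBall hz))) _
      (hℓ_mem c (hdisc (mem_closedBall_self hρ.1.le)))
      ((hℓ_dist z c).trans ((mem_sphere.mp hz).le.trans hρ.2))
    rw [Real.dist_eq] at this
    linarith [le_abs_self (v (ℓ z) - v (ℓ c))]
  have hd : dist (0 : ℂ) (dist x y) = dist x y := by
    rw [dist_zero_left, Complex.norm_real, Real.norm_of_nonneg dist_nonneg]
  have := abs_sub_le_of_abs_circleAverage_sub_le (b := (dist x y : ℂ)) hR (by rwa [hd])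
    hu_ℓ (fun z hz => hℓ0 ▸ hu_osc _ (hℓ_mem z hz)) hmean
  have hℓy : ℓ (dist x y) = y := hy
  rwa [Function.comp_apply, Function.comp_apply, hℓ0, hℓy, hd] at this

end Psh

lemma abs_sub_le_oscOn {X : Type*} [PseudoMetricSpace X] {U : Set X} {g : X → ℝ} {B : ℝ}
    (hB : ∀ x ∈ U, ‖g x‖ ≤ B) {x y : X} (hx : x ∈ U) (hy : y ∈ U) :
    |g x - g y| ≤ oscOn U g := by
  refine le_csSup ⟨2 * B, ?_⟩ ⟨x, hx, y, hy, rfl⟩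
  rintro _ ⟨p, hp, q, hq, rfl⟩
  linarith [abs_sub (g p) (g q), hB p hp, hB q hq, Real.norm_eq_abs (g p), Real.norm_eq_abs (g q)]

theorem stmt_4_general (k : ℕ)
    (v : EuclideanSpace ℂ (Fin k) → ℝ)
    (hv_cont : ContinuousOn v (ball 0 3))
    (M : ℝ) (hM : 0 < M) :
    ∀ ε : ℝ, 0 < ε → ∃ δ : ℝ, 0 < δ ∧
      ∀ u : EuclideanSpace ℂ (Fin k) → ℝ,
        ContinuousOn u (ball 0 3) →
        IsPshOn (ball 0 3) (v + u) → IsPshOn (ball 0 3) (v - u) →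
        oscOn (ball 0 2) u ≤ M →
        ∀ x ∈ ball (0 : EuclideanSpace ℂ (Fin k)) 1, ∀ y ∈ ball (0 : EuclideanSpace ℂ (Fin k)) 1,
          dist x y ≤ δ → |u x - u y| ≤ ε := by
  intro ε hε
  have hK : closedBall (0 : EuclideanSpace ℂ (Fin k)) 2 ⊆ ball 0 3 :=
    closedBall_subset_ball (by norm_num)
  obtain ⟨r, hr, hv_mod⟩ := Metric.uniformContinuousOn_iff_le.mp
    ((isCompact_closedBall 0 2).uniformContinuousOn_of_continuous (hv_cont.mono hK)) (ε / 4)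
    (by positivity)
  set R := min r (1 / 2)
  have hR : 0 < R := by positivity
  refine ⟨min R (ε * R / (8 * M)), by positivity, ?_⟩
  intro u hu hvu hvmu hosc x hx y _ hxy
  have hxR : closedBall x (2 * R) ⊆ ball 0 2 := closedBall_subset_ball' (by
    rw [mem_ball] at hx; linarith [min_le_right r (1 / 2)])
  obtain ⟨B, hB⟩ := (isCompact_closedBall _ _).exists_bound_of_continuousOn (hu.mono hK)
  have key := abs_sub_le_of_isPshOn_add_of_isPshOn_sub hR (hxy.trans (min_le_left _ _))
    ((hxR.trans ball_subset_closedBall).trans hK) hu hv_cont hvu hvmu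
    (fun p hp q hq hpq => hv_mod p (ball_subset_closedBall (hxR hp)) q
      (ball_subset_closedBall (hxR hq)) (hpq.trans (min_le_left _ _)))
    (fun p hp => (abs_sub_le_oscOn (fun z hz => hB z (ball_subset_closedBall hz)) (hxR hp)
      (hxR (mem_closedBall_self (by positivity)))).trans hosc)
  have hd : 4 * M * dist x y / R ≤ ε / 2 := by
    rw [div_le_iff₀ hR]
    have := (le_div_iff₀ (by positivity)).mp (hxy.trans (min_le_right _ _))
    linarith
  linarith

/-- local content of Corollary 2.9 of the paper. Let `v` be a continuous
plurisubharmonic function on `B(0,3) ⊆ ℂ^k` and `M > 0`. The family of all continuous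
`u : B(0,3) → ℝ` with `v + u` and `v - u` plurisubharmonic (i.e. `|dd^c u| ≤ dd^c v`) and
`Ω_{B(0,2)}(u) ≤ M` is uniformly equicontinuous on `B(0,1)`. -/
theorem stmt_4 (k : ℕ) (hk : 1 ≤ k)
    (v : EuclideanSpace ℂ (Fin k) → ℝ)
    (hv_cont : ContinuousOn v (ball 0 3)) (hv_psh : IsPshOn (ball 0 3) v)
    (M : ℝ) (hM : 0 < M) :
    ∀ ε : ℝ, 0 < ε → ∃ δ : ℝ, 0 < δ ∧
      ∀ u : EuclideanSpace ℂ (Fin k) → ℝ,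
        ContinuousOn u (ball 0 3) →
        IsPshOn (ball 0 3) (v + u) → IsPshOn (ball 0 3) (v - u) →
        oscOn (ball 0 2) u ≤ M →
        ∀ x ∈ ball (0 : EuclideanSpace ℂ (Fin k)) 1, ∀ y ∈ ball (0 : EuclideanSpace ℂ (Fin k)) 1,
          dist x y ≤ δ → |u x - u y| ≤ ε :=
  stmt_4_general k v hv_cont M hM
end

section
/- Let X be a compact metric space, let T : C(X;ℝ) → C(X;ℝ) be a continuous linear operator on the Banach space of continuous real-valued functions on X with the supremum norm, let g₀ ∈ C(X;ℝ) and δ > 0. Assume that the family {Tⁿ g₀ : n ≥ 0} is uniformly bounded and equicontinuous, and that Tⁿ g₀ (x) ≥ δ for all x ∈ X and all n ≥ 0. Then there exists ρ ∈ C(X;ℝ) with ρ(x) ≥ δ for all x ∈ X and Tρ = ρ. -/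
open Filter Topology Finset

/-- construction of the density `ρ` in Section 3.4 of the paper.
Let `X` be a compact metric space, `T` a continuous linear operator on `C(X, ℝ)` (with the
sup-norm), `g₀ ∈ C(X, ℝ)` and `δ > 0`. If the family `{Tⁿ g₀ : n ≥ 0}` is uniformly bounded
and equicontinuous and `Tⁿ g₀ ≥ δ` pointwise for all `n`, then there is `ρ ∈ C(X, ℝ)` with
`ρ ≥ δ` pointwise and `T ρ = ρ`. -/
theorem stmt_6 {X : Type*} [MetricSpace X] [CompactSpace X]
    (T : C(X, ℝ) →L[ℝ] C(X, ℝ)) (g₀ : C(X, ℝ)) (δ : ℝ) (hδ : 0 < δ)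
    (hbd : ∃ M : ℝ, ∀ n : ℕ, ‖(T ^ n) g₀‖ ≤ M)
    (heqc : ∀ ε : ℝ, 0 < ε → ∃ δ' : ℝ, 0 < δ' ∧
      ∀ n : ℕ, ∀ x y : X, dist x y ≤ δ' → |((T ^ n) g₀) x - ((T ^ n) g₀) y| ≤ ε)
    (hpos : ∀ n : ℕ, ∀ x : X, δ ≤ ((T ^ n) g₀) x) :
    ∃ ρ : C(X, ℝ), (∀ x, δ ≤ ρ x) ∧ T ρ = ρ := by
  obtain ⟨M, hM⟩ := hbd
  have hM0 : 0 ≤ M := le_trans (norm_nonneg _) (hM 0)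
  have hval : ∀ n x, |((T ^ n) g₀) x| ≤ M := fun n x =>
    le_trans (((T ^ n) g₀).norm_coe_le_norm x) (hM n)
  choose d hd hde using fun k : ℕ => heqc (1 / (k + 1)) (by positivity)
  -- the Cesàro means
  set s : ℕ → C(X, ℝ) := fun n => ((n + 1 : ℝ))⁻¹ • ∑ j ∈ Finset.range (n + 1), (T ^ j) g₀
    with hs
  have hnpos : ∀ n : ℕ, (0:ℝ) < (n + 1 : ℝ) := fun n => by positivity
  have hsx : ∀ n x, (s n) x = ((n + 1 : ℝ))⁻¹ * ∑ j ∈ Finset.range (n + 1), ((T ^ j) g₀) x := by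
    intro n x
    simp [hs]
  -- the compact set
  set P : Set (X → ℝ) := {g | (∀ x, |g x| ≤ M) ∧
      ∀ k : ℕ, ∀ x y, dist x y ≤ d k → |g x - g y| ≤ 1 / (k + 1)} with hP
  set S : Set C(X, ℝ) := {f | (f : X → ℝ) ∈ P} with hSdef
  have hsS : ∀ n, s n ∈ S := by
    intro n
    constructor
    · intro x
      rw [hsx]
      rw [abs_mul, abs_inv, abs_of_pos (hnpos n)]
      rw [inv_mul_le_iff₀ (hnpos n)]
      calc |∑ j ∈ Finset.range (n + 1), ((T ^ j) g₀) x|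
          ≤ ∑ j ∈ Finset.range (n + 1), |((T ^ j) g₀) x| := Finset.abs_sum_le_sum_abs _ _
        _ ≤ ∑ _j ∈ Finset.range (n + 1), M := Finset.sum_le_sum fun j _ => hval j x
        _ = (n + 1 : ℝ) * M := by simp [mul_comm]
    · intro k x y hxy
      rw [hsx, hsx, ← mul_sub, ← Finset.sum_sub_distrib, abs_mul, abs_inv,
        abs_of_pos (hnpos n), inv_mul_le_iff₀ (hnpos n)]
      calc |∑ j ∈ Finset.range (n + 1), (((T ^ j) g₀) x - ((T ^ j) g₀) y)|
          ≤ ∑ j ∈ Finset.range (n + 1), |((T ^ j) g₀) x - ((T ^ j) g₀) y| :=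
            Finset.abs_sum_le_sum_abs _ _
        _ ≤ ∑ _j ∈ Finset.range (n + 1), (1 / ((k:ℝ) + 1)) :=
            Finset.sum_le_sum fun j _ => hde k j x y hxy
        _ = (n + 1 : ℝ) * (1 / ((k:ℝ) + 1)) := by simp [mul_comm]
  have hsδ : ∀ n x, δ ≤ (s n) x := by
    intro n x
    rw [hsx, le_inv_mul_iff₀ (hnpos n)]
    calc (n + 1 : ℝ) * δ = ∑ _j ∈ Finset.range (n + 1), δ := by simp [mul_comm]
      _ ≤ ∑ j ∈ Finset.range (n + 1), ((T ^ j) g₀) x := Finset.sum_le_sum fun j _ => hpos j x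
  -- P is closed
  have hPclosed : IsClosed P := by
    rw [hP, Set.setOf_and]
    apply IsClosed.inter
    · rw [Set.setOf_forall]
      exact isClosed_iInter fun x => isClosed_le ((continuous_apply x).abs) continuous_const
    · rw [Set.setOf_forall]
      refine isClosed_iInter fun k => ?_
      rw [Set.setOf_forall]
      refine isClosed_iInter fun x => ?_
      rw [Set.setOf_forall]
      refine isClosed_iInter fun y => ?_
      by_cases h : dist x y ≤ d k
      · simp only [h, forall_true_left]
        exact isClosed_le (((continuous_apply x).sub (continuous_apply y)).abs) continuous_const
      · simp [h]
  -- P is compact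
  have hPcompact : IsCompact P := by
    refine IsCompact.of_isClosed_subset (isCompact_univ_pi fun x => isCompact_Icc
      (a := -M) (b := M)) hPclosed ?_
    intro g hg
    intro x _
    exact abs_le.mp (hg.1 x)
  -- a modulus gives continuity
  have hcont : ∀ g : X → ℝ, (∀ k : ℕ, ∀ x y, dist x y ≤ d k → |g x - g y| ≤ 1 / (k + 1)) →
      Continuous g := by
    intro g hg
    rw [Metric.continuous_iff]
    intro x ε hε
    obtain ⟨k, hk⟩ := exists_nat_one_div_lt hε
    exact ⟨d k, hd k, fun y hy => by
      rw [Real.dist_eq]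
      exact lt_of_le_of_lt (hg k y x hy.le) hk⟩
  have himg : ContinuousMap.toFun '' S = P := by
    ext g
    constructor
    · rintro ⟨f, hf, rfl⟩; exact hf
    · intro hg
      exact ⟨⟨g, hcont g hg.2⟩, hg, rfl⟩
  -- equicontinuity of S
  have hS2 : Equicontinuous ((↑) : S → X → ℝ) := by
    intro x
    rw [Metric.equicontinuousAt_iff]
    intro ε hε
    obtain ⟨k, hk⟩ := exists_nat_one_div_lt hε
    refine ⟨d k, hd k, fun y hy f => lt_of_le_of_lt ?_ hk⟩
    rw [Real.dist_eq]
    rw [abs_sub_comm]; exact f.2.2 k y x hy.le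
  have hScompact : IsCompact S :=
    ArzelaAscoli.isCompact_of_equicontinuous S (by rw [himg]; exact hPcompact) hS2
  -- extract a convergent subsequence
  obtain ⟨ρ, hρS, φ, hφ, htends⟩ := hScompact.tendsto_subseq hsS
  refine ⟨ρ, ?_, ?_⟩
  · intro x
    have hev : Tendsto (fun n => (s (φ n)) x) atTop (𝓝 (ρ x)) :=
      ((continuous_eval_const x).tendsto ρ).comp htends
    exact ge_of_tendsto hev (Eventually.of_forall fun n => hsδ _ x)
  · -- the telescoping identity
    have key : ∀ n : ℕ, T (s n) - s n = ((n + 1 : ℝ))⁻¹ • ((T ^ (n + 1)) g₀ - g₀) := by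
      intro n
      have h1 : T (s n) = ((n + 1 : ℝ))⁻¹ • ∑ j ∈ Finset.range (n + 1), (T ^ (j + 1)) g₀ := by
        rw [hs]
        simp only [map_smul, map_sum]
        congr 1
        refine Finset.sum_congr rfl fun j _ => ?_
        rw [pow_succ']
        rfl
      rw [h1, hs]
      simp only
      rw [← smul_sub, ← Finset.sum_sub_distrib]
      congr 1
      have := Finset.sum_range_sub (f := fun j => (T ^ j) g₀) (n + 1)
      simpa using this
    have hnorm : ∀ n : ℕ, ‖T (s n) - s n‖ ≤ (M + M) / (n + 1 : ℝ) := by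
      intro n
      rw [key, div_eq_inv_mul]
      refine le_trans (norm_smul_le ((n + 1 : ℝ))⁻¹ ((T ^ (n + 1)) g₀ - g₀)) ?_
      rw [norm_inv, Real.norm_eq_abs, abs_of_pos (hnpos n)]
      gcongr
      calc ‖(T ^ (n + 1)) g₀ - g₀‖ ≤ ‖(T ^ (n + 1)) g₀‖ + ‖g₀‖ := norm_sub_le _ _
        _ ≤ M + M := add_le_add (hM (n + 1)) (by simpa using hM 0)
    have hlim : Tendsto (fun n : ℕ => (M + M) / (n + 1 : ℝ)) atTop (𝓝 0) := by
      have := (tendsto_const_div_atTop_nhds_zero_nat (M + M)).comp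
        (tendsto_add_atTop_nat 1)
      simpa [Function.comp_def] using this
    have hzero : Tendsto (fun n => T (s (φ n)) - s (φ n)) atTop (𝓝 0) := by
      refine squeeze_zero_norm (fun n => le_trans (hnorm (φ n)) ?_) hlim
      have h1 : (0:ℝ) ≤ M + M := by linarith
      have h2 : ((n:ℝ) + 1) ≤ ((φ n : ℕ) : ℝ) + 1 := by
        exact_mod_cast Nat.succ_le_succ hφ.le_apply
      gcongr
    have hTlim : Tendsto (fun n => T (s (φ n))) atTop (𝓝 (T ρ)) :=
      (T.continuous.tendsto ρ).comp htends
    have : Tendsto (fun n => T (s (φ n)) - s (φ n)) atTop (𝓝 (T ρ - ρ)) :=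
      hTlim.sub htends
    have h0 : T ρ - ρ = 0 := tendsto_nhds_unique this hzero
    exact sub_eq_zero.mp h0
end

section
/- Let (X, d) be a metric space and let u_n : X → ℝ (n ≥ 0) be bounded continuous functions. Let c > 0, 0 < β < 1, A > 1 with Aβ < 1, d₀ > 1 and γ > 0 be constants such that ‖u_n‖_∞ ≤ c·Aⁿ for all n ≥ 0, and such that for every κ > 1 there exists c_κ > 0 with m_X(u_n, r) ≤ c_κ · d₀ⁿ · r^{γκ^{−n}} for all n ≥ 0 and all 0 < r ≤ 1. Then the series u := Σ_{n≥0} βⁿ u_n converges uniformly on X, and for every q > 0 there exists C_q > 0 such that m_X(u, r) ≤ C_q · (1 + |log r|)^{−q} for all 0 < r ≤ 1. -/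
/-!
Cut the series `∑ βⁿ (uₙ x - uₙ y)` at the `N` with `κ^{2N} ≈ 1 + |log r|`, where `κ^{2q} = (Aβ)⁻¹`.
By the sup-norm bound the tail is `O((Aβ)^N) = O((1 + |log r|)^{-q})`. Each of the first `N` terms
is at most `c_κ d₀^N r^{γ/κ^N}`, and since `κ^N ≤ κ (1 + |log r|)^{1/2}` the factor `r^{γ/κ^N}` is
at most `e^γ exp(-(γ/κ²) κ^N)`. This decay, doubly exponential in `N`, absorbs `N d₀^N (Aβ)^{-N}`,
so the head is `O((Aβ)^N)` as well.
-/

open Real Finset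

lemma pow_mul_exp_neg_le_factorial {x : ℝ} (hx : 0 ≤ x) (k : ℕ) :
    x ^ k * exp (-x) ≤ k.factorial := by
  have h := pow_div_factorial_le_exp x hx k
  rw [div_le_iff₀ (by positivity)] at h
  rw [exp_neg, ← div_eq_mul_inv, div_le_iff₀ (exp_pos x)]
  linarith

lemma exists_pow_mul_exp_neg_mul_pow_le {E κ a : ℝ} (hE : 0 ≤ E) (hκ : 1 < κ) (ha : 0 < a) :
    ∃ M, ∀ n : ℕ, E ^ n * exp (-(a * κ ^ n)) ≤ M := by
  obtain ⟨k, hk⟩ := pow_unbounded_of_one_lt E hκ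
  refine ⟨k.factorial / a ^ k, fun n => ?_⟩
  have hEn : E ^ n ≤ (a * κ ^ n) ^ k / a ^ k := by
    rw [mul_pow, mul_div_cancel_left₀ _ (by positivity), ← pow_mul, mul_comm, pow_mul]
    exact pow_le_pow_left₀ hE hk.le n
  calc E ^ n * exp (-(a * κ ^ n)) ≤ (a * κ ^ n) ^ k / a ^ k * exp (-(a * κ ^ n)) := by gcongr
    _ = (a * κ ^ n) ^ k * exp (-(a * κ ^ n)) / a ^ k := by ring
    _ ≤ k.factorial / a ^ k := by
      gcongr
      exact pow_mul_exp_neg_le_factorial (by positivity) k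

lemma exists_nat_mul_pow_mul_exp_neg_le {d ρ κ a : ℝ} (hd : 0 ≤ d) (hρ : 0 < ρ) (hκ : 1 < κ)
    (ha : 0 < a) : ∃ M, ∀ N : ℕ, N * d ^ N * exp (-(a * κ ^ N)) ≤ M * ρ ^ N := by
  obtain ⟨M, hM⟩ := exists_pow_mul_exp_neg_mul_pow_le (E := 2 * d / ρ) (by positivity) hκ ha
  refine ⟨M, fun N => ?_⟩
  have hN : (N : ℝ) ≤ 2 ^ N := by exact_mod_cast N.lt_two_pow_self.le
  calc N * d ^ N * exp (-(a * κ ^ N)) ≤ 2 ^ N * d ^ N * exp (-(a * κ ^ N)) := by gcongr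
    _ = (2 * d / ρ) ^ N * exp (-(a * κ ^ N)) * ρ ^ N := by rw [div_pow, mul_pow]; field_simp
    _ ≤ M * ρ ^ N := by gcongr; exact hM N

lemma abs_tsum_le_of_le_geometric {g : ℕ → ℝ} {B ρ H : ℝ} (hρ0 : 0 ≤ ρ) (hρ1 : ρ < 1)
    (hg : ∀ n, |g n| ≤ B * ρ ^ n) {N : ℕ} (hH : ∀ n < N, |g n| ≤ H) :
    |∑' n, g n| ≤ N * H + B * ρ ^ N / (1 - ρ) := by
  have hsum : Summable g :=
    .of_norm_bounded ((summable_geometric_of_lt_one hρ0 hρ1).mul_left B) hg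
  have htail : HasSum (fun n => B * ρ ^ N * ρ ^ n) (B * ρ ^ N / (1 - ρ)) := by
    simpa only [div_eq_mul_inv] using (hasSum_geometric_of_lt_one hρ0 hρ1).mul_left (B * ρ ^ N)
  rw [← hsum.sum_add_tsum_nat_add N]
  calc _ ≤ |∑ n ∈ range N, g n| + |∑' n, g (n + N)| := abs_add_le _ _
    _ ≤ N * H + B * ρ ^ N / (1 - ρ) := by
      gcongr
      · calc |∑ n ∈ range N, g n| ≤ ∑ n ∈ range N, |g n| := abs_sum_le_sum_abs _ _
          _ ≤ N * H := by
            simpa using sum_le_card_nsmul _ _ H fun n hn => hH n (mem_range.1 hn)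
      · exact tsum_of_norm_bounded htail fun n => by
          rw [norm_eq_abs]; exact (hg (n + N)).trans_eq (by rw [pow_add]; ring)

lemma pow_mul_rpow_div_pow_le_of_le {d γ κ r : ℝ} (hd : 1 ≤ d) (hγ : 0 ≤ γ) (hκ : 1 ≤ κ)
    (hr0 : 0 < r) (hr1 : r ≤ 1) {n N : ℕ} (h : n ≤ N) :
    d ^ n * r ^ (γ / κ ^ n) ≤ d ^ N * r ^ (γ / κ ^ N) := by
  have hexp : γ / κ ^ N ≤ γ / κ ^ n := by gcongr
  exact mul_le_mul (pow_le_pow_right₀ hd h) (rpow_le_rpow_of_exponent_ge hr0 hr1 hexp)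
    (by positivity) (by positivity)

lemma rpow_div_le_exp_mul_exp_neg {r γ κ K : ℝ} (hr0 : 0 < r) (hr1 : r ≤ 1) (hγ : 0 ≤ γ)
    (hκ : 0 < κ) (hK : 1 ≤ K) (hKt : K ^ 2 ≤ κ ^ 2 * (1 + |log r|)) :
    r ^ (γ / K) ≤ exp γ * exp (-(γ / κ ^ 2 * K)) := by
  have hlog : log r = -|log r| := by rw [abs_of_nonpos (log_nonpos hr0.le hr1), neg_neg]
  rw [rpow_def_of_pos hr0, ← exp_add, exp_le_exp, hlog]
  have hK0 : 0 < K := by linarith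
  have h1 : γ / K ≤ γ := div_le_self hγ hK
  have h2 : γ / κ ^ 2 * K ≤ (1 + |log r|) * (γ / K) := by
    rw [div_mul_eq_mul_div, mul_div_assoc', div_le_div_iff₀ (by positivity) hK0]
    nlinarith
  nlinarith

lemma exists_le_sq_pow_le_sq_mul {t κ : ℝ} (ht : 1 ≤ t) (hκ : 1 < κ) :
    ∃ N : ℕ, t ≤ (κ ^ N) ^ 2 ∧ (κ ^ N) ^ 2 ≤ κ ^ 2 * t := by
  obtain ⟨n, hn, hn'⟩ := exists_nat_pow_near ht (one_lt_pow₀ hκ two_ne_zero)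
  refine ⟨n + 1, by rw [pow_right_comm]; exact hn'.le, ?_⟩
  calc (κ ^ (n + 1)) ^ 2 = κ ^ 2 * (κ ^ 2) ^ n := by ring
    _ ≤ κ ^ 2 * t := by gcongr

lemma pow_le_rpow_neg_of_le_sq {ρ q t : ℝ} (hρ : 0 < ρ) (hq : 0 < q) (ht : 0 < t) {N : ℕ}
    (h : t ≤ ((ρ⁻¹ ^ (2 * q)⁻¹) ^ N) ^ 2) : ρ ^ N ≤ t ^ (-q) := by
  have key : (((ρ⁻¹ ^ (2 * q)⁻¹) ^ N) ^ 2) ^ (-q) = ρ ^ N := by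
    rw [← pow_mul, ← rpow_natCast, ← rpow_mul (by positivity), ← rpow_mul (by positivity),
      inv_rpow hρ.le, ← rpow_neg hρ.le]
    rw [← rpow_natCast]; congr 1; push_cast; field_simp
  rw [← key]
  exact rpow_le_rpow_of_nonpos ht h (by linarith)

section Series

variable {X : Type*} {u : ℕ → X → ℝ} {c β A : ℝ}

lemma abs_pow_mul_le (hβ : 0 < β) (hbound : ∀ n x, |u n x| ≤ c * A ^ n) (n : ℕ) (x : X) :
    |β ^ n * u n x| ≤ c * (A * β) ^ n := by
  rw [abs_mul, abs_of_pos (pow_pos hβ n)]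
  calc β ^ n * |u n x| ≤ β ^ n * (c * A ^ n) := by gcongr; exact hbound n x
    _ = c * (A * β) ^ n := by ring

lemma abs_tsum_sub_tsum_le {d₀ γ κ C r : ℝ} (hβ0 : 0 < β) (hβ1 : β < 1) (hAβ0 : 0 < A * β)
    (hAβ : A * β < 1) (hd₀ : 1 ≤ d₀) (hγ : 0 ≤ γ) (hκ : 1 ≤ κ) (hC : 0 ≤ C) (hr0 : 0 < r)
    (hr1 : r ≤ 1) (hbound : ∀ n x, |u n x| ≤ c * A ^ n) {x y : X}
    (hmod : ∀ n, |u n x - u n y| ≤ C * d₀ ^ n * r ^ (γ / κ ^ n)) (N : ℕ) :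
    |∑' n, β ^ n * u n x - ∑' n, β ^ n * u n y| ≤
      N * (C * d₀ ^ N * r ^ (γ / κ ^ N)) + 2 * c * (A * β) ^ N / (1 - A * β) := by
  have hsum (z : X) : Summable fun n => β ^ n * u n z :=
    .of_norm_bounded ((summable_geometric_of_lt_one hAβ0.le hAβ).mul_left c)
      (abs_pow_mul_le hβ0 hbound · z)
  rw [← (hsum x).tsum_sub (hsum y)]
  refine abs_tsum_le_of_le_geometric hAβ0.le hAβ (fun n => ?_) fun n hn => ?_
  · calc |β ^ n * u n x - β ^ n * u n y| ≤ |β ^ n * u n x| + |β ^ n * u n y| := abs_sub _ _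
      _ ≤ 2 * c * (A * β) ^ n := by
        linarith [abs_pow_mul_le hβ0 hbound n x, abs_pow_mul_le hβ0 hbound n y]
  · rw [← mul_sub, abs_mul, abs_of_pos (pow_pos hβ0 n)]
    calc β ^ n * |u n x - u n y| ≤ 1 * (C * d₀ ^ n * r ^ (γ / κ ^ n)) :=
          mul_le_mul (pow_le_one₀ hβ0.le hβ1.le) (hmod n) (abs_nonneg _) zero_le_one
      _ ≤ C * d₀ ^ N * r ^ (γ / κ ^ N) := by
        rw [one_mul, mul_assoc, mul_assoc]
        exact mul_le_mul_of_nonneg_left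
          (pow_mul_rpow_div_pow_le_of_le hd₀ hγ hκ hr0 hr1 hn.le) hC

end Series

theorem stmt_7_general {X : Type*} [MetricSpace X] (u : ℕ → X → ℝ)
    (c β A d₀ γ : ℝ) (hc : 0 < c)
    (hβ0 : 0 < β) (hβ1 : β < 1) (hA : 1 < A) (hAβ : A * β < 1)
    (hd₀ : 1 < d₀) (hγ : 0 < γ)
    (hbound : ∀ n : ℕ, ∀ x : X, |u n x| ≤ c * A ^ n)
    (hmod : ∀ κ : ℝ, 1 < κ → ∃ cκ : ℝ, 0 < cκ ∧
      ∀ n : ℕ, ∀ r : ℝ, 0 < r → r ≤ 1 → ∀ x y : X, dist x y ≤ r →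
        |u n x - u n y| ≤ cκ * d₀ ^ n * r ^ (γ / κ ^ n)) :
    TendstoUniformly (fun N : ℕ => fun x : X => ∑ n ∈ Finset.range N, β ^ n * u n x)
      (fun x : X => ∑' n : ℕ, β ^ n * u n x) Filter.atTop ∧
    ∀ q : ℝ, 0 < q → ∃ Cq : ℝ, 0 < Cq ∧
      ∀ r : ℝ, 0 < r → r ≤ 1 → ∀ x y : X, dist x y ≤ r →
        |(∑' n : ℕ, β ^ n * u n x) - (∑' n : ℕ, β ^ n * u n y)| ≤
          Cq * (1 + |Real.log r|) ^ (-q) := by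
  have hρ : 0 < A * β := mul_pos (by linarith) hβ0
  refine ⟨tendstoUniformly_tsum_nat ((summable_geometric_of_lt_one hρ.le hAβ).mul_left c)
    (abs_pow_mul_le hβ0 hbound), fun q hq => ?_⟩
  set κ := (A * β)⁻¹ ^ (2 * q)⁻¹
  have hκ : 1 < κ := one_lt_rpow ((one_lt_inv₀ hρ).2 hAβ) (by positivity)
  obtain ⟨cκ, hcκ, hmodκ⟩ := hmod κ hκ
  obtain ⟨M, hM⟩ :=
    exists_nat_mul_pow_mul_exp_neg_le (d := d₀) (a := γ / κ ^ 2) (by linarith) hρ hκ (by positivity)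
  have hM0 : 0 ≤ M := by simpa using hM 0
  refine ⟨cκ * exp γ * M + 2 * c / (1 - A * β), by have := sub_pos.2 hAβ; positivity, ?_⟩
  intro r hr0 hr1 x y hxy
  obtain ⟨N, hN, hN'⟩ :=
    exists_le_sq_pow_le_sq_mul (le_add_of_nonneg_right (abs_nonneg (log r))) hκ
  have hhead : (N : ℝ) * d₀ ^ N * r ^ (γ / κ ^ N) ≤ exp γ * M * (A * β) ^ N :=
    calc _ ≤ N * d₀ ^ N * (exp γ * exp (-(γ / κ ^ 2 * κ ^ N))) := by
          gcongr
          exact rpow_div_le_exp_mul_exp_neg hr0 hr1 hγ.le (by positivity) (one_le_pow₀ hκ.le) hN'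
      _ = exp γ * (N * d₀ ^ N * exp (-(γ / κ ^ 2 * κ ^ N))) := by ring
      _ ≤ exp γ * M * (A * β) ^ N := by
          rw [mul_assoc _ M]; exact mul_le_mul_of_nonneg_left (hM N) (exp_pos γ).le
  calc _ ≤ N * (cκ * d₀ ^ N * r ^ (γ / κ ^ N)) + 2 * c * (A * β) ^ N / (1 - A * β) :=
        abs_tsum_sub_tsum_le hβ0 hβ1 hρ hAβ hd₀.le hγ.le hκ.le hcκ.le hr0 hr1 hbound
          (fun k => hmodκ k r hr0 hr1 x y hxy) N
    _ ≤ (cκ * exp γ * M + 2 * c / (1 - A * β)) * (A * β) ^ N := by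
        have := mul_le_mul_of_nonneg_left hhead hcκ.le
        rw [mul_div_right_comm]
        linarith
    _ ≤ _ := by gcongr; exact pow_le_rpow_neg_of_le_sq hρ hq (by positivity) hN

/-- analytic core of Lemma 2.12 of the paper. Let `u_n : X → ℝ` be bounded
continuous functions with `‖u_n‖_∞ ≤ c Aⁿ` and, for every `κ > 1`,
`m_X(u_n, r) ≤ c_κ d₀ⁿ r^{γ κ^{-n}}`. If `0 < β < 1` and `Aβ < 1`, then `u = Σ βⁿ u_n`
converges uniformly and, for every `q > 0`, `m_X(u, r) ≤ C_q (1 + |log r|)^{-q}`. -/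
theorem stmt_7 {X : Type*} [MetricSpace X] (u : ℕ → X → ℝ)
    (hcont : ∀ n, Continuous (u n))
    (c β A d₀ γ : ℝ) (hc : 0 < c)
    (hβ0 : 0 < β) (hβ1 : β < 1) (hA : 1 < A) (hAβ : A * β < 1)
    (hd₀ : 1 < d₀) (hγ : 0 < γ)
    (hbound : ∀ n : ℕ, ∀ x : X, |u n x| ≤ c * A ^ n)
    (hmod : ∀ κ : ℝ, 1 < κ → ∃ cκ : ℝ, 0 < cκ ∧
      ∀ n : ℕ, ∀ r : ℝ, 0 < r → r ≤ 1 → ∀ x y : X, dist x y ≤ r →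
        |u n x - u n y| ≤ cκ * d₀ ^ n * r ^ (γ / κ ^ n)) :
    TendstoUniformly (fun N : ℕ => fun x : X => ∑ n ∈ Finset.range N, β ^ n * u n x)
      (fun x : X => ∑' n : ℕ, β ^ n * u n x) Filter.atTop ∧
    ∀ q : ℝ, 0 < q → ∃ Cq : ℝ, 0 < Cq ∧
      ∀ r : ℝ, 0 < r → r ≤ 1 → ∀ x y : X, dist x y ≤ r →
        |(∑' n : ℕ, β ^ n * u n x) - (∑' n : ℕ, β ^ n * u n y)| ≤
          Cq * (1 + |Real.log r|) ^ (-q) :=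
  stmt_7_general u c β A d₀ γ hc hβ0 hβ1 hA hAβ hd₀ hγ hbound hmod
end

section
/- Let (X, d) be a metric space, q > 2, L₀ > 0, and let φ : X → ℝ satisfy ‖φ‖_{log^q} < ∞. Then there exists a constant C > 0, depending only on L₀ and q, such that for every integer n ≥ 1, every real m > 0, and all points x₀, …, x_{n−1}, y₀, …, y_{n−1} ∈ X with d(x_l, y_l) ≤ e^{−m−(n−l)L₀} for all 0 ≤ l ≤ n−1, one has Σ_{l=0}^{n−1} |φ(x_l) − φ(y_l)| ≤ C · ‖φ‖_{log^q} · m^{−(q−1)}. -/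
/-!
The distance bound gives `1 + |log d(x_l, y_l)| ≥ m + (n - l) L₀`, so the `l`-th term is at most
`K (m + (n - l) L₀)^{-q}`. By the mean value theorem `(m + (n - l) L₀)^{-q}` is at most
`1 / ((q - 1) L₀)` times an increment of `t ↦ t^{1-q}` along the grid `m + k L₀`, so these terms
sum to at most `m^{1-q} / ((q - 1) L₀)`: a discrete form of `∫_m^∞ t^{-q} dt / L₀`.
-/

open Real Finset

lemma mul_rpow_neg_le_rpow_sub_rpow {q a h : ℝ} (hq : 1 ≤ q) (ha : 0 < a) (hh : 0 < h) :
    (q - 1) * h * (a + h) ^ (-q) ≤ a ^ (1 - q) - (a + h) ^ (1 - q) := by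
  have hderiv : ∀ t ∈ Set.Ioo a (a + h),
      HasDerivAt (fun t : ℝ => t ^ (1 - q)) ((1 - q) * t ^ (-q)) t := fun t ht => by
    simpa using hasDerivAt_rpow_const (p := 1 - q) (Or.inl (ha.trans ht.1).ne')
  have hcont : ContinuousOn (fun t : ℝ => t ^ (1 - q)) (Set.Icc a (a + h)) := fun t ht =>
    (continuousAt_rpow_const t _ (Or.inl (ha.trans_le ht.1).ne')).continuousWithinAt
  obtain ⟨c, hc, hslope⟩ :=
    exists_hasDerivAt_eq_slope _ _ (lt_add_of_pos_right a hh) hcont hderiv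
  have hdiff : a ^ (1 - q) - (a + h) ^ (1 - q) = (q - 1) * h * c ^ (-q) := by
    rw [add_sub_cancel_left, eq_div_iff hh.ne'] at hslope
    linarith
  rw [hdiff]
  have hq' : 0 ≤ (q - 1) * h := mul_nonneg (sub_nonneg.mpr hq) hh.le
  exact mul_le_mul_of_nonneg_left
    (rpow_le_rpow_of_nonpos (ha.trans hc.1) hc.2.le (by linarith)) hq'

lemma sum_rpow_neg_le {q L m : ℝ} (hq : 1 < q) (hL : 0 < L) (hm : 0 < m) (n : ℕ) :
    ∑ l ∈ range n, (m + (n - l) * L) ^ (-q) ≤ m ^ (1 - q) / ((q - 1) * L) := by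
  set f : ℕ → ℝ := fun l => (m + (n - l) * L) ^ (1 - q)
  have hstep : ∀ l ∈ range n, (q - 1) * L * (m + (n - l) * L) ^ (-q) ≤ f (l + 1) - f l := by
    intro l hl
    have hln : (l : ℝ) + 1 ≤ n := by exact_mod_cast mem_range.mp hl
    have := mul_rpow_neg_le_rpow_sub_rpow hq.le (a := m + (n - (l + 1)) * L)
      (by nlinarith) hL
    simp only [f, Nat.cast_succ]
    convert this using 3 <;> ring
  have hsum : (q - 1) * L * ∑ l ∈ range n, (m + (n - l) * L) ^ (-q) ≤ m ^ (1 - q) := by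
    calc _ ≤ f n - f 0 := by rw [mul_sum, ← sum_range_sub]; exact sum_le_sum hstep
      _ ≤ m ^ (1 - q) := by
        simp only [f, sub_self, zero_mul, add_zero, CharP.cast_eq_zero, sub_zero]
        linarith [rpow_nonneg (by positivity : 0 ≤ m + n * L) (1 - q)]
  rw [le_div_iff₀ (by nlinarith)]
  linarith

lemma abs_sub_le_of_dist_le_exp {X : Type*} [MetricSpace X] {φ : X → ℝ} {q K s : ℝ}
    (hφ : ∀ a b : X, a ≠ b → |φ a - φ b| * (1 + |log (dist a b)|) ^ q ≤ K) (hK : 0 ≤ K)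
    (hq : 0 ≤ q) (hs : 0 < s) {a b : X} (hab : dist a b ≤ exp (-s)) :
    |φ a - φ b| ≤ K * s ^ (-q) := by
  rcases eq_or_ne a b with rfl | hne
  · simpa using mul_nonneg hK (rpow_nonneg hs.le _)
  have hlog : s ≤ 1 + |log (dist a b)| := by
    have := log_le_log (dist_pos.mpr hne) hab
    rw [log_exp] at this
    linarith [neg_le_abs (log (dist a b))]
  have hsq : 0 < s ^ q := rpow_pos_of_pos hs q
  rw [rpow_neg hs.le, ← div_eq_mul_inv, le_div_iff₀ hsq]
  calc |φ a - φ b| * s ^ q ≤ |φ a - φ b| * (1 + |log (dist a b)|) ^ q := by gcongr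
    _ ≤ K := hφ a b hne

/-- Lemma 4.13 of the paper. Let `q > 2`, `L₀ > 0`. There is `C > 0`
depending only on `L₀` and `q` such that for every metric space `X`, every `φ : X → ℝ` with
`log^q` seminorm at most `K`, every `n ≥ 1`, `m > 0` and points with
`dist (x l) (y l) ≤ e^{-m-(n-l)L₀}` for `0 ≤ l ≤ n-1`, one has
`Σ_{l<n} |φ(x_l) - φ(y_l)| ≤ C K m^{-(q-1)}`. -/
theorem stmt_8 (q L₀ : ℝ) (hq : 2 < q) (hL : 0 < L₀) :
    ∃ C : ℝ, 0 < C ∧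
      ∀ (X : Type) (_ : MetricSpace X) (φ : X → ℝ) (K : ℝ), 0 ≤ K →
        (∀ a b : X, a ≠ b → |φ a - φ b| * (1 + |Real.log (dist a b)|) ^ q ≤ K) →
        ∀ n : ℕ, 1 ≤ n → ∀ m : ℝ, 0 < m → ∀ x y : ℕ → X,
          (∀ l : ℕ, l < n → dist (x l) (y l) ≤ Real.exp (-m - ((n : ℝ) - l) * L₀)) →
          ∑ l ∈ Finset.range n, |φ (x l) - φ (y l)| ≤ C * K * m ^ (-(q - 1)) := by
  have hq1 : 1 < q := by linarith
  refine ⟨1 / ((q - 1) * L₀), by have := sub_pos.mpr hq1; positivity, ?_⟩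
  intro X _ φ K hK hφ n _ m hm x y hxy
  have hterm : ∀ l ∈ range n, |φ (x l) - φ (y l)| ≤ K * (m + (n - l) * L₀) ^ (-q) := by
    intro l hl
    have hln : (l : ℝ) < n := by exact_mod_cast mem_range.mp hl
    refine abs_sub_le_of_dist_le_exp hφ hK (by linarith) (by nlinarith) ?_
    convert hxy l (mem_range.mp hl) using 2
    ring
  calc ∑ l ∈ range n, |φ (x l) - φ (y l)|
      ≤ K * ∑ l ∈ range n, (m + (n - l) * L₀) ^ (-q) := by rw [mul_sum]; exact sum_le_sum hterm
    _ ≤ K * (m ^ (1 - q) / ((q - 1) * L₀)) := by gcongr; exact sum_rpow_neg_le hq1 hL hm n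
    _ = 1 / ((q - 1) * L₀) * K * m ^ (-(q - 1)) := by rw [neg_sub]; ring
end

section
/- Let X be a compact metric space, f : X → X a continuous map, μ an f-invariant Borel probability measure on X, and L : C(X;ℝ) → C(X;ℝ) a linear operator such that: (i) ∫ L(g) dμ = ∫ g dμ for all g ∈ C(X;ℝ); (ii) L((g∘f)·h) = g·L(h) for all g, h ∈ C(X;ℝ); and (iii) for every g ∈ C(X;ℝ), Lⁿ(g) converges uniformly on X to the constant ∫ g dμ. Then μ is mixing of all orders: for every integer r ≥ 1 and all g₀, g₁, …, g_r ∈ C(X;ℝ), the integral ∫ g₀·(g₁∘f^{n₁})·(g₂∘f^{n₂})⋯(g_r∘f^{n_r}) dμ, taken over integer times with 0 = n₀ ≤ n₁ ≤ ⋯ ≤ n_r, converges to ∏_{j=0}^{r} ∫ g_j dμ as min_{0≤j<r}(n_{j+1} − n_j) → ∞. -/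
/-!
By (i) and (ii), `Lⁿ` is dual to composition with `fⁿ`:
`∫ g₀ · (H ∘ fⁿ) dμ = ∫ H · Lⁿ g₀ dμ`. Splitting off the first factor, the integral of order
`r + 1` is `∫ g₀ · (H ∘ f^{n₁}) dμ`, where `H = ∏_{j ≥ 1} g_j ∘ f^{n_j - n₁}` is bounded by
`∏ ‖g_j‖` uniformly in the times. Since `L^{n₁} g₀` is uniformly close to `∫ g₀ dμ` by (iii),
the integral is close to `∫ g₀ dμ · ∫ H dμ`, and `∫ H dμ` is a correlation of order `r` whose
gaps are gaps of the original times, so induction on `r` concludes.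
-/

open MeasureTheory Filter

section TransferOperator

variable {X : Type*} [TopologicalSpace X] {f : X → X} (hf : Continuous f)
  {L : C(X, ℝ) →ₗ[ℝ] C(X, ℝ)}

lemma pow_comp_iterate_mul (hhom : ∀ g h : C(X, ℝ), L (g.comp ⟨f, hf⟩ * h) = g * L h)
    (n : ℕ) (g h : C(X, ℝ)) :
    (L ^ n) (g.comp ⟨f^[n], hf.iterate n⟩ * h) = g * (L ^ n) h := by
  induction n generalizing h with
  | zero => rfl
  | succ n ih =>
    have hcomp : g.comp ⟨f^[n + 1], hf.iterate (n + 1)⟩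
        = (g.comp ⟨f^[n], hf.iterate n⟩).comp ⟨f, hf⟩ := rfl
    rw [pow_succ, Module.End.mul_apply, hcomp, hhom, ih, Module.End.mul_apply]

variable [MeasurableSpace X] {μ : Measure X}

lemma integral_pow_apply (hint : ∀ g : C(X, ℝ), ∫ x, L g x ∂μ = ∫ x, g x ∂μ)
    (n : ℕ) (g : C(X, ℝ)) : ∫ x, (L ^ n) g x ∂μ = ∫ x, g x ∂μ := by
  induction n with
  | zero => rfl
  | succ n ih => rw [pow_succ', Module.End.mul_apply, hint, ih]

lemma integral_comp_iterate_mul (hint : ∀ g : C(X, ℝ), ∫ x, L g x ∂μ = ∫ x, g x ∂μ)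
    (hhom : ∀ g h : C(X, ℝ), L (g.comp ⟨f, hf⟩ * h) = g * L h) (n : ℕ) (g h : C(X, ℝ)) :
    ∫ x, g (f^[n] x) * h x ∂μ = ∫ x, g x * (L ^ n) h x ∂μ := by
  have hL := integral_pow_apply hint n (g.comp ⟨f^[n], hf.iterate n⟩ * h)
  rw [pow_comp_iterate_mul hf hhom] at hL
  exact hL.symm

lemma abs_integral_comp_iterate_mul_sub_le [CompactSpace X] [OpensMeasurableSpace X]
    [IsProbabilityMeasure μ] (hint : ∀ g : C(X, ℝ), ∫ x, L g x ∂μ = ∫ x, g x ∂μ)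
    (hhom : ∀ g h : C(X, ℝ), L (g.comp ⟨f, hf⟩ * h) = g * L h) {n : ℕ} {g H : C(X, ℝ)}
    {c B δ : ℝ} (hH : ∀ x, |H x| ≤ B) (hg : ∀ x, |(L ^ n) g x - c| ≤ δ) :
    |∫ x, H (f^[n] x) * g x ∂μ - c * ∫ x, H x ∂μ| ≤ B * δ := by
  have hintegrable (u : C(X, ℝ)) : Integrable u μ :=
    (BoundedContinuousFunction.mkOfCompact u).integrable μ
  have hdiff : ∫ x, H (f^[n] x) * g x ∂μ - c * ∫ x, H x ∂μ
      = ∫ x, H x * ((L ^ n) g x - c) ∂μ := by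
    rw [integral_comp_iterate_mul hf hint hhom, ← integral_const_mul, ← integral_sub]
    · simp only [mul_sub, mul_comm c]
    · exact hintegrable (H * (L ^ n) g)
    · exact (hintegrable H).const_mul c
  have hbound (x : X) : ‖H x * ((L ^ n) g x - c)‖ ≤ B * δ := by
    rw [Real.norm_eq_abs, abs_mul]
    exact mul_le_mul (hH x) (hg x) (abs_nonneg _) ((abs_nonneg _).trans (hH x))
  rw [hdiff, ← Real.norm_eq_abs]
  simpa using norm_integral_le_of_norm_le_const (μ := μ) (Eventually.of_forall hbound)

end TransferOperator

section Times

variable {r : ℕ}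

def tailTimes (n : Fin (r + 2) → ℕ) : Fin (r + 1) → ℕ := fun j => n j.succ - n 1

variable {n : Fin (r + 2) → ℕ}

lemma tailTimes_zero : tailTimes n 0 = 0 := Nat.sub_self _

lemma apply_one_le_apply_succ (hn : Monotone n) (j : Fin (r + 1)) : n 1 ≤ n j.succ :=
  hn (Fin.succ_le_succ_iff.mpr (Fin.zero_le j))

lemma tailTimes_monotone (hn : Monotone n) : Monotone (tailTimes n) :=
  fun _ _ hij => Nat.sub_le_sub_right (hn (Fin.succ_le_succ_iff.mpr hij)) _

lemma tailTimes_succ_sub_castSucc (hn : Monotone n) (j : Fin r) :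
    tailTimes n j.succ - tailTimes n j.castSucc = n j.succ.succ - n j.succ.castSucc := by
  have h₁ := apply_one_le_apply_succ hn j.castSucc
  have h₂ : n j.castSucc.succ ≤ n j.succ.succ :=
    hn (Fin.succ_le_succ_iff.mpr (Fin.castSucc_le_succ j))
  rw [tailTimes, tailTimes, ← Fin.succ_castSucc]
  omega

lemma prod_apply_iterate_eq_mul_tailTimes {X M : Type*} [CommMonoid M] (f : X → X)
    (g : Fin (r + 2) → X → M) (h₀ : n 0 = 0) (hn : Monotone n) (x : X) :
    ∏ j, g j (f^[n j] x)
      = g 0 x * ∏ j : Fin (r + 1), g j.succ (f^[tailTimes n j] (f^[n 1] x)) := by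
  rw [Fin.prod_univ_succ, h₀, Function.iterate_zero_apply]
  congr 1
  refine Finset.prod_congr rfl fun j _ => ?_
  rw [← Function.iterate_add_apply, tailTimes, Nat.sub_add_cancel (apply_one_le_apply_succ hn j)]

end Times

lemma mul_div_two_mul_add_one_le {B ε : ℝ} (hB : 0 ≤ B) (hε : 0 ≤ ε) :
    B * (ε / (2 * (B + 1))) ≤ ε / 2 := by
  rw [mul_div_assoc', div_le_div_iff₀ (by positivity) two_pos]
  nlinarith

lemma abs_prod_apply_le_prod_norm {X ι : Type*} [TopologicalSpace X] [CompactSpace X]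
    [Fintype ι] (g : ι → C(X, ℝ)) (y : ι → X) : |∏ j, g j (y j)| ≤ ∏ j, ‖g j‖ := by
  rw [Finset.abs_prod]
  exact Finset.prod_le_prod (fun _ _ => abs_nonneg _) fun j _ => (g j).norm_coe_le_norm _

section Mixing

variable {X : Type*} [TopologicalSpace X] [MeasurableSpace X]

def MixingOfOrder (f : X → X) (μ : Measure X) (r : ℕ) : Prop :=
  ∀ g : Fin (r + 1) → C(X, ℝ), ∀ ε : ℝ, 0 < ε →
    ∃ N : ℕ, ∀ n : Fin (r + 1) → ℕ, n 0 = 0 → Monotone n →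
      (∀ j : Fin r, N ≤ n j.succ - n j.castSucc) →
      |(∫ x, ∏ j : Fin (r + 1), (g j) (f^[n j] x) ∂μ) - ∏ j : Fin (r + 1), ∫ x, (g j) x ∂μ| ≤ ε

lemma mixingOfOrder_zero (f : X → X) (μ : Measure X) : MixingOfOrder f μ 0 :=
  fun _ _ hε => ⟨0, fun n h₀ _ _ => by simpa [h₀] using hε.le⟩

lemma mixingOfOrder_succ [CompactSpace X] [OpensMeasurableSpace X] {f : X → X}
    (hf : Continuous f) {μ : Measure X} [IsProbabilityMeasure μ] {L : C(X, ℝ) →ₗ[ℝ] C(X, ℝ)}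
    (hint : ∀ g : C(X, ℝ), ∫ x, L g x ∂μ = ∫ x, g x ∂μ)
    (hhom : ∀ g h : C(X, ℝ), L (g.comp ⟨f, hf⟩ * h) = g * L h)
    (hconv : ∀ g : C(X, ℝ),
      TendstoUniformly (fun n : ℕ => fun x : X => ((L ^ n) g) x) (fun _ => ∫ x, g x ∂μ) atTop)
    {r : ℕ} (ih : MixingOfOrder f μ r) : MixingOfOrder f μ (r + 1) := by
  intro g ε hε
  set c := ∫ x, g 0 x ∂μ
  set B := ∏ j : Fin (r + 1), ‖g j.succ‖
  have hB : 0 ≤ B := Finset.prod_nonneg fun _ _ => norm_nonneg _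
  obtain ⟨N₁, hN₁⟩ := ih (fun j => g j.succ) (ε / (2 * (|c| + 1))) (by positivity)
  obtain ⟨N₀, hN₀⟩ := eventually_atTop.mp <|
    Metric.tendstoUniformly_iff.mp (hconv (g 0)) (ε / (2 * (B + 1))) (by positivity)
  refine ⟨max N₀ N₁, fun n h₀ hn hgap => ?_⟩
  set m := tailTimes n
  let H : C(X, ℝ) := ∏ j : Fin (r + 1), (g j.succ).comp ⟨f^[m j], hf.iterate (m j)⟩
  have hH (x : X) : H x = ∏ j : Fin (r + 1), g j.succ (f^[m j] x) := by
    simp [H, ContinuousMap.prod_apply]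
  have hHB (x : X) : |H x| ≤ B := by
    rw [hH]
    exact abs_prod_apply_le_prod_norm _ _
  have hN₀n : N₀ ≤ n 1 := by simpa [h₀] using (le_max_left _ _).trans (hgap 0)
  have hfirst : |∫ x, H (f^[n 1] x) * g 0 x ∂μ - c * ∫ x, H x ∂μ| ≤ ε / 2 :=
    (abs_integral_comp_iterate_mul_sub_le hf hint hhom hHB fun x => by
      rw [abs_sub_comm, ← Real.dist_eq]; exact (hN₀ _ hN₀n x).le).trans
      (mul_div_two_mul_add_one_le hB hε.le)
  have htail : |∫ x, H x ∂μ - ∏ j : Fin (r + 1), ∫ x, g j.succ x ∂μ| ≤ ε / (2 * (|c| + 1)) := by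
    simp only [hH]
    refine hN₁ m tailTimes_zero (tailTimes_monotone hn) fun j => ?_
    rw [tailTimes_succ_sub_castSucc hn]
    exact (le_max_right _ _).trans (hgap j.succ)
  have hsecond : |c| * |∫ x, H x ∂μ - ∏ j : Fin (r + 1), ∫ x, g j.succ x ∂μ| ≤ ε / 2 :=
    (mul_le_mul_of_nonneg_left htail (abs_nonneg c)).trans
      (mul_div_two_mul_add_one_le (abs_nonneg c) hε.le)
  have hprod (x : X) : ∏ j, g j (f^[n j] x) = H (f^[n 1] x) * g 0 x := by
    rw [prod_apply_iterate_eq_mul_tailTimes f (fun j => g j) h₀ hn, hH, mul_comm]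
  simp_rw [hprod]
  rw [Fin.prod_univ_succ]
  calc |∫ x, H (f^[n 1] x) * g 0 x ∂μ - c * ∏ j : Fin (r + 1), ∫ x, g j.succ x ∂μ|
      = |(∫ x, H (f^[n 1] x) * g 0 x ∂μ - c * ∫ x, H x ∂μ)
          + c * (∫ x, H x ∂μ - ∏ j : Fin (r + 1), ∫ x, g j.succ x ∂μ)| := by ring_nf
    _ ≤ ε := (abs_add_le _ _).trans (by rw [abs_mul]; linarith)

end Mixing

theorem stmt_13_general {X : Type*} [MetricSpace X] [CompactSpace X]
    [MeasurableSpace X] [BorelSpace X]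
    (f : X → X) (hf : Continuous f)
    (μ : Measure X) [IsProbabilityMeasure μ]
    (L : C(X, ℝ) →ₗ[ℝ] C(X, ℝ))
    (hint : ∀ g : C(X, ℝ), ∫ x, (L g) x ∂μ = ∫ x, g x ∂μ)
    (hhom : ∀ g h : C(X, ℝ), L ((g.comp ⟨f, hf⟩) * h) = g * L h)
    (hconv : ∀ g : C(X, ℝ),
      TendstoUniformly (fun n : ℕ => fun x : X => ((L ^ n) g) x)
        (fun _ : X => ∫ x, g x ∂μ) atTop) :
    ∀ r : ℕ, 1 ≤ r → ∀ g : Fin (r + 1) → C(X, ℝ), ∀ ε : ℝ, 0 < ε →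
      ∃ N : ℕ, ∀ n : Fin (r + 1) → ℕ, n 0 = 0 → Monotone n →
        (∀ j : Fin r, N ≤ n j.succ - n j.castSucc) →
        |(∫ x, ∏ j : Fin (r + 1), (g j) (f^[n j] x) ∂μ) -
            ∏ j : Fin (r + 1), ∫ x, (g j) x ∂μ| ≤ ε := by
  suffices ∀ r, MixingOfOrder f μ r from fun r _ => this r
  intro r
  induction r with
  | zero => exact mixingOfOrder_zero f μ
  | succ r ih => exact mixingOfOrder_succ hf hint hhom hconv ih

/-- first part of Proposition 4.5 of the paper, abstract form. Let `X`
be a compact metric space, `f : X → X` continuous, `μ` an `f`-invariant Borel probability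
measure and `L` a linear operator on `C(X, ℝ)` with `∫ L g dμ = ∫ g dμ`,
`L((g∘f)·h) = g·L h`, and `Lⁿ g → ∫ g dμ` uniformly for every `g`. Then `μ` is mixing of
all orders: for `0 = n₀ ≤ n₁ ≤ ⋯ ≤ n_r`,
`∫ g₀ (g₁∘f^{n₁}) ⋯ (g_r∘f^{n_r}) dμ → ∏ ∫ g_j dμ` as `min (n_{j+1} - n_j) → ∞`. -/
theorem stmt_13 {X : Type*} [MetricSpace X] [CompactSpace X]
    [MeasurableSpace X] [BorelSpace X]
    (f : X → X) (hf : Continuous f)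
    (μ : Measure X) [IsProbabilityMeasure μ] (hinv : μ.map f = μ)
    (L : C(X, ℝ) →ₗ[ℝ] C(X, ℝ))
    (hint : ∀ g : C(X, ℝ), ∫ x, (L g) x ∂μ = ∫ x, g x ∂μ)
    (hhom : ∀ g h : C(X, ℝ), L ((g.comp ⟨f, hf⟩) * h) = g * L h)
    (hconv : ∀ g : C(X, ℝ),
      TendstoUniformly (fun n : ℕ => fun x : X => ((L ^ n) g) x)
        (fun _ : X => ∫ x, g x ∂μ) atTop) :
    ∀ r : ℕ, 1 ≤ r → ∀ g : Fin (r + 1) → C(X, ℝ), ∀ ε : ℝ, 0 < ε →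
      ∃ N : ℕ, ∀ n : Fin (r + 1) → ℕ, n 0 = 0 → Monotone n →
        (∀ j : Fin r, N ≤ n j.succ - n j.castSucc) →
        |(∫ x, ∏ j : Fin (r + 1), (g j) (f^[n j] x) ∂μ) -
            ∏ j : Fin (r + 1), ∫ x, (g j) x ∂μ| ≤ ε :=
  stmt_13_general f hf μ L hint hhom hconv
end

section
/- Let X be a compact metric space, f : X → X a continuous map, μ an f-invariant Borel probability measure on X, and L : C(X;ℝ) → C(X;ℝ) a linear operator such that: (i) ∫ L(g) dμ = ∫ g dμ for all g ∈ C(X;ℝ); (ii) L((g∘f)·h) = g·L(h) for all g, h ∈ C(X;ℝ); and (iii) for every g ∈ C(X;ℝ), Lⁿ(g) converges uniformly on X to the constant ∫ g dμ. Then μ is K-mixing: for every g ∈ L²(μ) with ∫ g dμ = 0, one has sup{ |∫ g·(l∘fⁿ) dμ| : l ∈ L²(μ), ‖l‖_{L²(μ)} ≤ 1 } → 0 as n → ∞. -/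
/-!
Applying (i) to `(l ∘ f) * h` and using (ii) gives `∫ (l ∘ f) h dμ = ∫ l (L h) dμ` for continuous
`l, h`; iterating, `∫ (l ∘ fⁿ) G dμ = ∫ l (Lⁿ G) dμ`, and since `f` preserves `μ` both sides are
`L²`-continuous in `l`, so this holds for every `l ∈ L²(μ)`. If `G` is continuous with
`‖g - G‖₂ ≤ δ`, the correlation of `g` with `l ∘ fⁿ` is therefore at most
`(δ + sup |Lⁿ G|) ‖l‖₂`, and by (iii) `sup |Lⁿ G|` is eventually close to
`|∫ G dμ| = |∫ (G - g) dμ| ≤ δ`.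
-/

open MeasureTheory Filter
open scoped BoundedContinuousFunction

section L2

variable {X : Type*} [MeasurableSpace X] {μ : Measure X} {a b : X → ℝ} {T : X → X} {u v : X → ℝ}

theorem abs_integral_mul_le_eLpNorm_mul (ha : MemLp a 2 μ) (hb : MemLp b 2 μ) :
    |∫ x, a x * b x ∂μ| ≤ (eLpNorm a 2 μ).toReal * (eLpNorm b 2 μ).toReal := by
  have h_inner : ∫ x, a x * b x ∂μ = inner ℝ (ha.toLp a) (hb.toLp b) := by
    rw [L2.inner_def]
    refine integral_congr_ae ?_
    filter_upwards [ha.coeFn_toLp, hb.coeFn_toLp] with x hax hbx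
    simp [hax, hbx, mul_comm]
  rw [h_inner, ← Lp.norm_toLp a ha, ← Lp.norm_toLp b hb]
  exact abs_real_inner_le_norm _ _

theorem abs_integral_comp_mul_sub_integral_mul_le (hT : MeasurePreserving T μ μ)
    (hu : MemLp u 2 μ) (hv : MemLp v 2 μ) {m : X → ℝ} (hm : MemLp m 2 μ) :
    |∫ x, m (T x) * u x ∂μ - ∫ x, m x * v x ∂μ|
      ≤ (eLpNorm m 2 μ).toReal * ((eLpNorm u 2 μ).toReal + (eLpNorm v 2 μ).toReal) := by
  have hmT : MemLp (m ∘ T) 2 μ := hm.comp_measurePreserving hT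
  have hnorm : eLpNorm (m ∘ T) 2 μ = eLpNorm m 2 μ :=
    eLpNorm_comp_measurePreserving hm.aestronglyMeasurable hT
  calc _ ≤ |∫ x, (m ∘ T) x * u x ∂μ| + |∫ x, m x * v x ∂μ| := abs_sub _ _
    _ ≤ (eLpNorm (m ∘ T) 2 μ).toReal * (eLpNorm u 2 μ).toReal
        + (eLpNorm m 2 μ).toReal * (eLpNorm v 2 μ).toReal :=
      add_le_add (abs_integral_mul_le_eLpNorm_mul hmT hu) (abs_integral_mul_le_eLpNorm_mul hm hv)
    _ = _ := by rw [hnorm]; ring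

variable [IsProbabilityMeasure μ]

theorem abs_integral_le_eLpNorm_two (ha : MemLp a 2 μ) :
    |∫ x, a x ∂μ| ≤ (eLpNorm a 2 μ).toReal := by
  have h := abs_integral_mul_le_eLpNorm_mul ha (memLp_const (1 : ℝ))
  simpa only [mul_one, eLpNorm_const (1 : ℝ) two_ne_zero (IsProbabilityMeasure.ne_zero μ),
    measure_univ, ENNReal.one_rpow, enorm_one, ENNReal.toReal_one] using h

theorem eLpNorm_two_toReal_le_of_forall_abs_le {C : ℝ} (hC : 0 ≤ C) (h : ∀ x, |a x| ≤ C) :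
    (eLpNorm a 2 μ).toReal ≤ C := by
  refine ENNReal.toReal_le_of_le_ofReal hC ?_
  simpa using eLpNorm_le_of_ae_bound (μ := μ) (p := 2) (ae_of_all μ h)

end L2

section Density

variable {X : Type*} [TopologicalSpace X] [NormalSpace X] [MeasurableSpace X] [BorelSpace X]
  {μ : Measure X} [μ.WeaklyRegular] {T : X → X} {u v : X → ℝ}

theorem integral_comp_mul_eq_of_forall_boundedContinuous (hT : MeasurePreserving T μ μ)
    (hu : MemLp u 2 μ) (hv : MemLp v 2 μ)
    (h : ∀ l : X →ᵇ ℝ, ∫ x, l (T x) * u x ∂μ = ∫ x, l x * v x ∂μ)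
    {l : X → ℝ} (hl : MemLp l 2 μ) :
    ∫ x, l (T x) * u x ∂μ = ∫ x, l x * v x ∂μ := by
  set C := (eLpNorm u 2 μ).toReal + (eLpNorm v 2 μ).toReal
  have hC : 0 < C + 1 := by positivity
  rw [← sub_eq_zero, ← abs_nonpos_iff]
  refine le_of_forall_pos_le_add fun ε hε => ?_
  obtain ⟨l', hll', hl'⟩ := hl.exists_boundedContinuous_eLpNorm_sub_le (by norm_num)
    (ENNReal.ofReal_pos.mpr (div_pos hε hC)).ne'
  have hlT : Integrable (fun x => l (T x) * u x) μ :=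
    (hl.comp_measurePreserving hT).integrable_mul hu
  have hl'T : Integrable (fun x => l' (T x) * u x) μ :=
    (hl'.comp_measurePreserving hT).integrable_mul hu
  have hlv : Integrable (fun x => l x * v x) μ := hl.integrable_mul hv
  have hl'v : Integrable (fun x => l' x * v x) μ := hl'.integrable_mul hv
  have hsub : ∫ x, l (T x) * u x ∂μ - ∫ x, l x * v x ∂μ
      = ∫ x, (l - ⇑l') (T x) * u x ∂μ - ∫ x, (l - ⇑l') x * v x ∂μ := by
    simp only [Pi.sub_apply, sub_mul]
    rw [integral_sub hlT hl'T, integral_sub hlv hl'v, h l']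
    ring
  have hε' : (eLpNorm (l - ⇑l') 2 μ).toReal ≤ ε / (C + 1) :=
    ENNReal.toReal_le_of_le_ofReal (div_pos hε hC).le hll'
  rw [hsub, zero_add]
  calc _ ≤ (eLpNorm (l - ⇑l') 2 μ).toReal * C :=
        abs_integral_comp_mul_sub_integral_mul_le hT hu hv (hl.sub hl')
    _ ≤ ε / (C + 1) * (C + 1) := by gcongr; linarith
    _ = ε := div_mul_cancel₀ ε hC.ne'

end Density

section Transfer

variable {X : Type*} [TopologicalSpace X] [MeasurableSpace X] {μ : Measure X}
  {f : X → X} {hf : Continuous f} {L : C(X, ℝ) →ₗ[ℝ] C(X, ℝ)}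

theorem integral_comp_iterate_mul_eq_integral_mul_pow
    (hint : ∀ g : C(X, ℝ), ∫ x, L g x ∂μ = ∫ x, g x ∂μ)
    (hhom : ∀ g h : C(X, ℝ), L (g.comp ⟨f, hf⟩ * h) = g * L h) (l : C(X, ℝ)) (n : ℕ)
    (g : C(X, ℝ)) : ∫ x, l (f^[n] x) * g x ∂μ = ∫ x, l x * (L ^ n) g x ∂μ := by
  induction n generalizing g with
  | zero => rfl
  | succ n ih =>
    have hstep : ∫ x, l (f^[n] (f x)) * g x ∂μ = ∫ x, l (f^[n] x) * L g x ∂μ := by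
      have h := hint ((l.comp ⟨f^[n], hf.iterate n⟩).comp ⟨f, hf⟩ * g)
      rw [hhom] at h
      simpa using h.symm
    simp only [Function.iterate_succ_apply]
    rw [hstep, ih, pow_succ, Module.End.mul_apply]

end Transfer

section KMixing

variable {X : Type*} [MetricSpace X] [CompactSpace X] [MeasurableSpace X] [BorelSpace X]
  {f : X → X} {hf : Continuous f} {μ : Measure X} [IsProbabilityMeasure μ]
  {L : C(X, ℝ) →ₗ[ℝ] C(X, ℝ)}

theorem abs_integral_mul_comp_iterate_le (hmp : MeasurePreserving f μ μ)
    (hint : ∀ g : C(X, ℝ), ∫ x, L g x ∂μ = ∫ x, g x ∂μ)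
    (hhom : ∀ g h : C(X, ℝ), L (g.comp ⟨f, hf⟩ * h) = g * L h) (n : ℕ)
    {g l : X → ℝ} (hg : MemLp g 2 μ) (hl : MemLp l 2 μ) (G : C(X, ℝ)) {C : ℝ} (hC : 0 ≤ C)
    (hLG : ∀ x, |(L ^ n) G x| ≤ C) :
    |∫ x, g x * l (f^[n] x) ∂μ|
      ≤ ((eLpNorm (g - ⇑G) 2 μ).toReal + C) * (eLpNorm l 2 μ).toReal := by
  have hmpn := hmp.iterate n
  have hln : MemLp (l ∘ f^[n]) 2 μ := hl.comp_measurePreserving hmpn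
  have hG : MemLp G 2 μ := G.memLp μ ℝ
  have hduality : ∫ x, G x * l (f^[n] x) ∂μ = ∫ x, l x * (L ^ n) G x ∂μ := by
    simp only [mul_comm (G _)]
    exact integral_comp_mul_eq_of_forall_boundedContinuous hmpn hG (((L ^ n) G).memLp μ ℝ)
      (fun l' => integral_comp_iterate_mul_eq_integral_mul_pow hint hhom l'.toContinuousMap n G) hl
  have hsplit : ∫ x, g x * l (f^[n] x) ∂μ
      = ∫ x, (g - ⇑G) x * l (f^[n] x) ∂μ + ∫ x, l x * (L ^ n) G x ∂μ := by
    have hgG : Integrable (fun x => (g - ⇑G) x * l (f^[n] x)) μ := (hg.sub hG).integrable_mul hln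
    have hGl : Integrable (fun x => G x * l (f^[n] x)) μ := hG.integrable_mul hln
    rw [← hduality, ← integral_add hgG hGl]
    simp only [Pi.sub_apply, sub_mul, sub_add_cancel]
  have hnorm : eLpNorm (l ∘ f^[n]) 2 μ = eLpNorm l 2 μ :=
    eLpNorm_comp_measurePreserving hl.aestronglyMeasurable hmpn
  rw [hsplit]
  calc _ ≤ _ := abs_add_le _ _
    _ ≤ (eLpNorm (g - ⇑G) 2 μ).toReal * (eLpNorm (l ∘ f^[n]) 2 μ).toReal
        + (eLpNorm l 2 μ).toReal * (eLpNorm ((L ^ n) G) 2 μ).toReal :=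
      add_le_add (abs_integral_mul_le_eLpNorm_mul (hg.sub hG) hln)
        (abs_integral_mul_le_eLpNorm_mul hl (((L ^ n) G).memLp μ ℝ))
    _ ≤ _ := by
      rw [hnorm, add_mul, mul_comm C]
      gcongr
      exact eLpNorm_two_toReal_le_of_forall_abs_le hC hLG

end KMixing

/-- second part of Proposition 4.5 of the paper, abstract form. Under
the same hypotheses as Statement 13, `μ` is K-mixing: for every `g ∈ L²(μ)` with
`∫ g dμ = 0`, the correlations `∫ g (l∘fⁿ) dμ` tend to `0` uniformly over `l` in the unit
ball of `L²(μ)`. -/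
theorem stmt_14 {X : Type*} [MetricSpace X] [CompactSpace X]
    [MeasurableSpace X] [BorelSpace X]
    (f : X → X) (hf : Continuous f)
    (μ : Measure X) [IsProbabilityMeasure μ] (hinv : μ.map f = μ)
    (L : C(X, ℝ) →ₗ[ℝ] C(X, ℝ))
    (hint : ∀ g : C(X, ℝ), ∫ x, (L g) x ∂μ = ∫ x, g x ∂μ)
    (hhom : ∀ g h : C(X, ℝ), L ((g.comp ⟨f, hf⟩) * h) = g * L h)
    (hconv : ∀ g : C(X, ℝ),
      TendstoUniformly (fun n : ℕ => fun x : X => ((L ^ n) g) x)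
        (fun _ : X => ∫ x, g x ∂μ) atTop) :
    ∀ g : X → ℝ, MemLp g 2 μ → ∫ x, g x ∂μ = 0 →
      ∀ ε : ℝ, 0 < ε → ∃ N : ℕ, ∀ n : ℕ, N ≤ n →
        ∀ l : X → ℝ, MemLp l 2 μ → eLpNorm l 2 μ ≤ 1 →
          |∫ x, g x * l (f^[n] x) ∂μ| ≤ ε := by
  intro g hg hg0 ε hε
  have hε3 : 0 < ε / 3 := by positivity
  obtain ⟨G, hgG, hG⟩ :=
    hg.exists_boundedContinuous_eLpNorm_sub_le (by norm_num) (ENNReal.ofReal_pos.mpr hε3).ne'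
  replace hgG : (eLpNorm (g - ⇑G) 2 μ).toReal ≤ ε / 3 := ENNReal.toReal_le_of_le_ofReal hε3.le hgG
  have hmean : |∫ x, G x ∂μ| ≤ ε / 3 := by
    have h := abs_integral_le_eLpNorm_two (hg.sub hG)
    rw [integral_sub' (hg.integrable one_le_two) (hG.integrable one_le_two), hg0,
      zero_sub, abs_neg] at h
    linarith
  obtain ⟨N, hN⟩ := eventually_atTop.mp
    (Metric.tendstoUniformly_iff.mp (hconv G.toContinuousMap) _ hε3)
  refine ⟨N, fun n hn l hl hl1 => ?_⟩
  have hLG : ∀ x, |(L ^ n) G.toContinuousMap x| ≤ 2 * (ε / 3) := fun x => by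
    have h := hN n hn x
    rw [Real.dist_eq, abs_sub_comm, BoundedContinuousFunction.coe_toContinuousMap] at h
    linarith [abs_sub_abs_le_abs_sub ((L ^ n) G.toContinuousMap x) (∫ x, G x ∂μ)]
  have hl1 : (eLpNorm l 2 μ).toReal ≤ 1 :=
    ENNReal.toReal_le_of_le_ofReal zero_le_one (by simpa using hl1)
  calc _ ≤ ((eLpNorm (g - ⇑G) 2 μ).toReal + 2 * (ε / 3)) * (eLpNorm l 2 μ).toReal :=
        abs_integral_mul_comp_iterate_le ⟨hf.measurable, hinv⟩ hint hhom n hg hl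
          G.toContinuousMap (by positivity) hLG
    _ ≤ (ε / 3 + 2 * (ε / 3)) * 1 := by gcongr
    _ = ε := by ring
end
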